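/- arXiv:2208.03981 — 10 statements merged into one kernel-verified Lean document; each statement's English description precedes it below -/
import Mathlib

section
/- Let V be a Hilbert space over 𝕂 = ℝ or ℂ and let A be a linear operator on V defined on a subspace D(A) ⊆ V. Then A is m-dissipative if and only if A is maximal dissipative and D(A) is dense in V. (Phillips' theorem.) -/
variable {𝕜 V : Type*} [RCLike 𝕜] [NormedAddCommGroup V] [InnerProductSpace 𝕜 V]
  [CompleteSpace V]

/-- An operator `A` on `V` is *dissipative* if `Re ⟪Ax, x⟫ ≤ 0` for all `x ∈ D(A)`. -/
def Dissipative (A : V →ₗ.[𝕜] V) : Prop :=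
  ∀ x : A.domain, RCLike.re (@inner 𝕜 _ _ (A x) (x : V)) ≤ 0

/-- `A` is *m-dissipative* if it is dissipative and `(Id - A) D(A) = V`. -/
def MDissipative (A : V →ₗ.[𝕜] V) : Prop :=
  Dissipative A ∧ ∀ y : V, ∃ x : A.domain, (x : V) - A x = y

/-- `A` is *maximal dissipative* if it is dissipative and the only dissipative
extension of `A` is `A` itself. -/
def MaximalDissipative (A : V →ₗ.[𝕜] V) : Prop :=
  Dissipative A ∧ ∀ B : V →ₗ.[𝕜] V, Dissipative B → A ≤ B → A = B

open RCLike Submodule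

lemma diss_norm_le {A : V →ₗ.[𝕜] V} (hA : Dissipative A) (x : A.domain) :
    ‖(x : V)‖ ≤ ‖(x : V) - A x‖ ∧ ‖A x‖ ≤ ‖(x : V) - A x‖ := by
  have h := norm_sub_sq (𝕜 := 𝕜) (x : V) (A x)
  have hre : re (@inner 𝕜 _ _ (x : V) (A x)) ≤ 0 := by
    rw [← inner_re_symm]; exact hA x
  constructor
  · nlinarith [norm_nonneg ((x:V) - A x), norm_nonneg (x:V), sq_nonneg ‖A x‖]
  · have : ‖A x‖ ^ 2 ≤ ‖(x : V) - A x‖ ^ 2 := by nlinarith [sq_nonneg ‖(x:V)‖]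
    nlinarith [norm_nonneg ((x:V) - A x), norm_nonneg (A x)]

set_option linter.unusedSectionVars false

lemma mdiss_max {A : V →ₗ.[𝕜] V} (h : MDissipative A) : MaximalDissipative A := by
  refine ⟨h.1, fun B hB hAB => ?_⟩
  have hdom : B.domain ≤ A.domain := by
    intro x hx
    obtain ⟨x', hx'⟩ := h.2 ((x : V) - B ⟨x, hx⟩)
    -- z := x - x' satisfies B z = z
    have hx'B : (x' : V) ∈ B.domain := hAB.1 x'.2
    have hBx' : B ⟨(x' : V), hx'B⟩ = A x' := (hAB.2 rfl).symm
    set z : B.domain := ⟨x, hx⟩ - ⟨(x' : V), hx'B⟩ with hz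
    have hBz : B z = (z : V) := by
      have h1 : B z = B ⟨x, hx⟩ - B ⟨(x' : V), hx'B⟩ := B.map_sub _ _
      have h2 : (z : V) = x - x' := rfl
      rw [h1, hBx', h2]
      have h3 : A x' = (x' : V) - ((x : V) - B ⟨x, hx⟩) := by
        rw [← hx']; abel
      rw [h3]; abel
    have hzero : (z : V) = 0 := by
      have := hB z
      rw [hBz, inner_self_eq_norm_sq (𝕜 := 𝕜)] at this
      have : ‖(z : V)‖ = 0 := by nlinarith [norm_nonneg (z : V)]
      simpa [← RCLike.ofReal_pow] using this
    have : (x : V) = x' := by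
      have h2 : (z : V) = x - x' := rfl
      rw [h2] at hzero
      exact sub_eq_zero.mp hzero
    rw [this]; exact x'.2
  exact (LinearPMap.eq_of_le_of_domain_eq hAB (le_antisymm hAB.1 hdom))

lemma mdiss_dense {A : V →ₗ.[𝕜] V} (h : MDissipative A) : Dense (A.domain : Set V) := by
  rw [Submodule.dense_iff_topologicalClosure_eq_top, Submodule.topologicalClosure_eq_top_iff]
  rw [Submodule.eq_bot_iff]
  intro y hy
  obtain ⟨x, hx⟩ := h.2 y
  have h0 : @inner 𝕜 _ _ (x : V) y = 0 := (Submodule.mem_orthogonal _ _).mp hy _ x.2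
  rw [← hx, inner_sub_right, inner_self_eq_norm_sq_to_K] at h0
  have hre : ‖(x : V)‖ ^ 2 - re (@inner 𝕜 _ _ (x : V) (A x)) = 0 := by
    have h1 := congrArg re h0
    rw [map_sub, ← RCLike.ofReal_pow, RCLike.ofReal_re, map_zero] at h1
    exact h1
  have hd : re (@inner 𝕜 _ _ (x : V) (A x)) ≤ 0 := by rw [inner_re_symm]; exact h.1 x
  have hx0 : (x : V) = 0 := by
    have : ‖(x : V)‖ = 0 := by nlinarith [norm_nonneg (x : V)]
    simpa [← RCLike.ofReal_pow] using this
  have : x = 0 := Subtype.ext hx0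
  rw [← hx, this]
  simp

lemma le_supSpanSingleton (A : V →ₗ.[𝕜] V) (x₀ z₀ : V) (hx : x₀ ∉ A.domain) :
    A ≤ A.supSpanSingleton x₀ z₀ hx :=
  LinearPMap.left_le_sup _ _ _

lemma supSpanSingleton_diss {A : V →ₗ.[𝕜] V} {x₀ z₀ : V} (hx : x₀ ∉ A.domain)
    (hP : ∀ (u : A.domain) (c : 𝕜),
      re (@inner 𝕜 _ _ ((A u : V) + c • z₀) ((u : V) + c • x₀)) ≤ 0) :
    Dissipative (A.supSpanSingleton x₀ z₀ hx) := by
  intro w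
  have hw : (w : V) ∈ A.domain ⊔ (𝕜 ∙ x₀) := w.2
  obtain ⟨u, hu, s, hs, husw⟩ := Submodule.mem_sup.mp hw
  obtain ⟨c, rfl⟩ := Submodule.mem_span_singleton.mp hs
  have hwe : w = ⟨u + c • x₀,
      Submodule.mem_sup.2 ⟨u, hu, _, Submodule.mem_span_singleton.2 ⟨c, rfl⟩, rfl⟩⟩ :=
    Subtype.ext husw.symm
  have h1 : (A.supSpanSingleton x₀ z₀ hx) w = (A ⟨u, hu⟩ : V) + c • z₀ := by
    rw [congrArg (A.supSpanSingleton x₀ z₀ hx) hwe]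
    exact LinearPMap.supSpanSingleton_apply_mk A x₀ z₀ hx u hu c
  rw [h1, ← husw]
  exact hP ⟨u, hu⟩ c

open Filter Topology in
lemma cauchySeq_of_dom {u g : ℕ → V} (hg : CauchySeq g)
    (h : ∀ n m, dist (u n) (u m) ≤ dist (g n) (g m)) : CauchySeq u := by
  rw [Metric.cauchySeq_iff] at hg ⊢
  intro ε hε
  obtain ⟨N, hN⟩ := hg ε hε
  exact ⟨N, fun n hn m hm => lt_of_le_of_lt (h n m) (hN n hn m hm)⟩

lemma cross_calc {A : V →ₗ.[𝕜] V} (hA : Dissipative A) {y : V}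
    (horto : ∀ u : A.domain, @inner 𝕜 _ _ ((u : V) - A u) y = 0)
    (u : A.domain) (c : 𝕜) :
    re (@inner 𝕜 _ _ ((A u : V) + c • (-y)) ((u : V) + c • y)) ≤ 0 := by
  have hb : @inner 𝕜 _ _ (A u : V) y = @inner 𝕜 _ _ (u : V) y := by
    have := horto u
    rw [inner_sub_left, sub_eq_zero] at this
    exact this.symm
  have expand : @inner 𝕜 _ _ ((A u : V) + c • (-y)) ((u : V) + c • y)
      = @inner 𝕜 _ _ (A u : V) (u : V) + c * @inner 𝕜 _ _ (u : V) y
        - (starRingEnd 𝕜) (c * @inner 𝕜 _ _ (u : V) y)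
        - ((‖c‖ : 𝕜) ^ 2 * (‖y‖ : 𝕜) ^ 2) := by
    rw [map_mul, inner_conj_symm, ← RCLike.conj_mul c, ← inner_self_eq_norm_sq_to_K (𝕜 := 𝕜) y]
    simp only [inner_add_left, inner_add_right, inner_smul_left, inner_smul_right,
      inner_neg_left, smul_neg, hb]
    ring
  rw [expand, map_sub, map_sub, map_add, RCLike.conj_re]
  have h1 := hA u
  have h2 : re ((‖c‖ : 𝕜) ^ 2 * (‖y‖ : 𝕜) ^ 2) = ‖c‖ ^ 2 * ‖y‖ ^ 2 := by
    rw [← RCLike.ofReal_pow, ← RCLike.ofReal_pow, ← RCLike.ofReal_mul, RCLike.ofReal_re]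
  rw [h2]
  nlinarith [sq_nonneg ‖c‖, sq_nonneg ‖y‖, sq_nonneg (‖c‖ * ‖y‖)]

open Filter Topology in
lemma max_dense_mdiss {A : V →ₗ.[𝕜] V} (hmax : MaximalDissipative A)
    (hd : Dense (A.domain : Set V)) : MDissipative A := by
  obtain ⟨hA, hm⟩ := hmax
  refine ⟨hA, ?_⟩
  set f : A.domain →ₗ[𝕜] V := A.domain.subtype - A.toFun with hf
  have hfapp : ∀ u : A.domain, f u = (u : V) - A u := fun u => rfl
  set R : Submodule 𝕜 V := LinearMap.range f with hR
  -- Step 1 : R is dense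
  have hRdense : Dense (R : Set V) := by
    by_contra hnd
    rw [Submodule.dense_iff_topologicalClosure_eq_top,
      Submodule.topologicalClosure_eq_top_iff] at hnd
    obtain ⟨y, hy, hy0⟩ := Submodule.exists_mem_ne_zero_of_ne_bot hnd
    have horto : ∀ u : A.domain, @inner 𝕜 _ _ ((u : V) - A u) y = 0 := fun u =>
      (Submodule.mem_orthogonal _ _).mp hy _ ⟨u, rfl⟩
    have hyd : y ∉ A.domain := by
      intro hyy
      have h0 := horto ⟨y, hyy⟩
      rw [inner_sub_left, sub_eq_zero] at h0
      have hre := congrArg re h0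
      rw [inner_self_eq_norm_sq_to_K, ← RCLike.ofReal_pow, RCLike.ofReal_re] at hre
      have hdis : re (@inner 𝕜 _ _ (A ⟨y, hyy⟩ : V) y) ≤ 0 := hA ⟨y, hyy⟩
      have : ‖y‖ = 0 := by nlinarith [norm_nonneg y]
      exact hy0 (by simpa using this)
    have hdiss := supSpanSingleton_diss hyd (cross_calc hA horto)
    have heq := hm _ hdiss (le_supSpanSingleton A y (-y) hyd)
    have hmem : y ∈ (A.supSpanSingleton y (-y) hyd).domain :=
      Submodule.mem_sup_right (Submodule.mem_span_singleton_self y)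
    exact hyd (by rw [congrArg LinearPMap.domain heq]; exact hmem)
  -- Step 2 : surjectivity of Id - A
  intro w
  have hwc : w ∈ closure (R : Set V) := hRdense w
  obtain ⟨r, hrR, hrw⟩ := mem_closure_iff_seq_limit.mp hwc
  choose xs hxs using fun n => (hrR n : r n ∈ R)
  have hxs' : ∀ n, (xs n : V) - A (xs n) = r n := fun n => hxs n
  have hbound : ∀ n m, ‖(xs n : V) - xs m‖ ≤ ‖r n - r m‖ ∧
      ‖(A (xs n) : V) - A (xs m)‖ ≤ ‖r n - r m‖ := by
    intro n m
    have hsub := diss_norm_le hA (xs n - xs m)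
    have hc1 : ((xs n - xs m : A.domain) : V) = (xs n : V) - xs m := rfl
    have hc2 : A (xs n - xs m) = A (xs n) - A (xs m) := A.map_sub _ _
    have hc3 : ((xs n - xs m : A.domain) : V) - A (xs n - xs m) = r n - r m := by
      rw [hc1, hc2, ← hxs' n, ← hxs' m]; abel
    rw [hc3, hc1, hc2] at hsub
    exact hsub
  have hrC : CauchySeq r := hrw.cauchySeq
  have hxC : CauchySeq (fun n => (xs n : V)) :=
    cauchySeq_of_dom hrC fun n m => by
      rw [dist_eq_norm, dist_eq_norm]; exact (hbound n m).1
  have hzC : CauchySeq (fun n => (A (xs n) : V)) :=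
    cauchySeq_of_dom hrC fun n m => by
      rw [dist_eq_norm, dist_eq_norm]; exact (hbound n m).2
  obtain ⟨x₀, hx₀⟩ := cauchySeq_tendsto_of_complete hxC
  obtain ⟨z, hz⟩ := cauchySeq_tendsto_of_complete hzC
  have hwelim : x₀ - z = w := by
    refine tendsto_nhds_unique (hx₀.sub hz) ?_
    have : (fun n => (xs n : V) - A (xs n)) = r := funext hxs'
    rw [this]; exact hrw
  -- the limit property
  have hP : ∀ (u : A.domain) (c : 𝕜),
      re (@inner 𝕜 _ _ ((A u : V) + c • z) ((u : V) + c • x₀)) ≤ 0 := by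
    intro u c
    have hterm : ∀ n, re (@inner 𝕜 _ _ ((A u : V) + c • (A (xs n) : V))
        ((u : V) + c • (xs n : V))) ≤ 0 := by
      intro n
      have h1 := hA (u + c • xs n)
      have hc1 : ((u + c • xs n : A.domain) : V) = (u : V) + c • (xs n : V) := rfl
      have hc2 : A (u + c • xs n) = A u + c • A (xs n) := by
        rw [A.map_add, A.map_smul]
      rw [hc1, hc2] at h1
      exact h1
    have h1 : Tendsto (fun n => (A u : V) + c • (A (xs n) : V)) atTop
        (𝓝 ((A u : V) + c • z)) := tendsto_const_nhds.add (hz.const_smul c)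
    have h2 : Tendsto (fun n => (u : V) + c • (xs n : V)) atTop
        (𝓝 ((u : V) + c • x₀)) := tendsto_const_nhds.add (hx₀.const_smul c)
    have hlim : Tendsto (fun n => re (@inner 𝕜 _ _ ((A u : V) + c • (A (xs n) : V))
        ((u : V) + c • (xs n : V)))) atTop
        (𝓝 (re (@inner 𝕜 _ _ ((A u : V) + c • z) ((u : V) + c • x₀)))) :=
      (RCLike.continuous_re.tendsto _).comp (h1.inner h2)
    exact le_of_tendsto hlim (Eventually.of_forall hterm)
  by_cases hmem : x₀ ∈ A.domain
  · refine ⟨⟨x₀, hmem⟩, ?_⟩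
    suffices hAz : A ⟨x₀, hmem⟩ = z by rw [hAz, ← hwelim]
    -- show z = A x₀ using density
    have hg : ∀ v : A.domain, @inner 𝕜 _ _ (z - A ⟨x₀, hmem⟩) (v : V) = 0 := by
      intro v
      set b := @inner 𝕜 _ _ (z - A ⟨x₀, hmem⟩) (v : V) with hbdef
      set a := re (@inner 𝕜 _ _ (A v : V) (v : V)) with hadef
      have hkey : ∀ t : ℝ, a + t * ‖b‖ ^ 2 ≤ 0 := by
        intro t
        set c : 𝕜 := (t : 𝕜) * b with hcdef
        have h1 := hP (v - c • ⟨x₀, hmem⟩) c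
        have hc1 : ((v - c • (⟨x₀, hmem⟩ : A.domain) : A.domain) : V) + c • x₀ = (v : V) := by
          simp
        have hc2 : (A (v - c • ⟨x₀, hmem⟩) : V) + c • z
            = (A v : V) + c • (z - A ⟨x₀, hmem⟩) := by
          rw [A.map_sub, A.map_smul]
          simp [smul_sub]
          abel
        rw [hc1, hc2] at h1
        have hcb : (starRingEnd 𝕜) c * b = ((t * ‖b‖ ^ 2 : ℝ) : 𝕜) := by
          rw [hcdef, map_mul, RCLike.conj_ofReal, mul_assoc, RCLike.conj_mul]
          push_cast; ring
        have hc3 : re (@inner 𝕜 _ _ ((A v : V) + c • (z - A ⟨x₀, hmem⟩)) (v : V))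
            = a + t * ‖b‖ ^ 2 := by
          rw [inner_add_left, inner_smul_left, ← hbdef, hcb, map_add, RCLike.ofReal_re, ← hadef]
        rw [hc3] at h1
        exact h1
      by_contra hne
      have hb2 : 0 < ‖b‖ ^ 2 := pow_pos (norm_pos_iff.mpr hne) 2
      have := hkey ((|a| + 1) / ‖b‖ ^ 2)
      rw [div_mul_cancel₀ _ (ne_of_gt hb2)] at this
      have := abs_nonneg a
      have := neg_abs_le a
      linarith
    have hzero : z - A ⟨x₀, hmem⟩ = 0 := hd.eq_zero_of_inner_left (𝕜 := 𝕜) (fun v hv => hg ⟨v, hv⟩)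
    have := sub_eq_zero.mp hzero
    exact this.symm
  · exfalso
    have hdiss := supSpanSingleton_diss hmem hP
    have heq := hm _ hdiss (le_supSpanSingleton A x₀ z hmem)
    have hmem2 : x₀ ∈ (A.supSpanSingleton x₀ z hmem).domain :=
      Submodule.mem_sup_right (Submodule.mem_span_singleton_self x₀)
    exact hmem (by rw [congrArg LinearPMap.domain heq]; exact hmem2)

/-- **Phillips' theorem**: an operator on a Hilbert space is m-dissipative if and only if
it is maximal dissipative and densely defined. -/
theorem mDissipative_iff_maximalDissipative_and_dense (A : V →ₗ.[𝕜] V) :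
    MDissipative A ↔ MaximalDissipative A ∧ Dense (A.domain : Set V) :=
  ⟨fun h => ⟨mdiss_max h, mdiss_dense h⟩, fun h => max_dense_mdiss h.1 h.2⟩
end

section
/- Let V be a Hilbert space over 𝕂 = ℝ or ℂ, let A₀ be a densely defined skew-symmetric operator on V, and let B be a dissipative operator on V with A₀ ⊆ B. Then B ⊆ (−A₀)*, i.e. every element y of D(B) belongs to the domain of the adjoint of −A₀ and (−A₀)* y = B y. -/
/-!
On `D(A₀)` the form `x ↦ Re ⟪B x, x⟫` vanishes by skew-symmetry, while it is `≤ 0` on all of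
`D(B)`. So for `x ∈ D(A₀)`, `y ∈ D(B)` and `z := ⟪B x, y⟫ + ⟪x, B y⟫`, the expansion of
`Re ⟪B (x + c y), x + c y⟫ ≤ 0` at `c = t · conj z` says that a real quadratic in `t` with no
constant term and linear coefficient `‖z‖²` is `≤ 0` for every `t`, which forces `z = 0`. Hence
`⟪-A₀ x, y⟫ = ⟪x, B y⟫`: `B` is a formal adjoint of `-A₀`, so `B ⊆ (-A₀)*`.
-/

variable {𝕜 V : Type*} [RCLike 𝕜] [NormedAddCommGroup V] [InnerProductSpace 𝕜 V]
  [CompleteSpace V]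

/-- An operator `A` on `V` is *skew-symmetric* if `⟪Au, v⟫ + ⟪u, Av⟫ = 0` for all
`u, v ∈ D(A)`. -/
def SkewSymmetric (A : V →ₗ.[𝕜] V) : Prop :=
  ∀ u v : A.domain, @inner 𝕜 _ _ (A u) (v : V) + @inner 𝕜 _ _ (u : V) (A v) = 0

open RCLike ComplexConjugate

local notation "⟪" x ", " y "⟫" => inner 𝕜 x y

omit [CompleteSpace V] in
theorem SkewSymmetric.re_inner_self_eq_zero {A : V →ₗ.[𝕜] V} (hA : SkewSymmetric A)
    (x : A.domain) : re ⟪A x, (x : V)⟫ = 0 := by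
  have h := congrArg re (hA x x)
  rw [map_add, inner_re_symm (x : V), map_zero] at h
  linarith

omit [CompleteSpace V] in
theorem Dissipative.re_inner_add_smul_le {B : V →ₗ.[𝕜] V} (hB : Dissipative B)
    (x y : B.domain) (c : 𝕜) :
    re ⟪B x, (x : V)⟫ + re (c * (⟪B x, (y : V)⟫ + ⟪(x : V), B y⟫))
      + ‖c‖ ^ 2 * re ⟪B y, (y : V)⟫ ≤ 0 := by
  have h := hB (x + c • y)
  rw [B.map_add, B.map_smul, Submodule.coe_add, Submodule.coe_smul, inner_add_left,
    inner_add_right, inner_add_right, inner_smul_left, inner_smul_left, inner_smul_right,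
    inner_smul_right, ← mul_assoc, RCLike.conj_mul, ← inner_conj_symm (B y : V) (x : V),
    ← map_mul] at h
  simpa only [map_add, mul_add, conj_re, ← ofReal_pow, re_ofReal_mul, add_assoc] using h

omit [CompleteSpace V] in
theorem Dissipative.inner_add_inner_eq_zero {B : V →ₗ.[𝕜] V} (hB : Dissipative B)
    {x : B.domain} (hx : re ⟪B x, (x : V)⟫ = 0) (y : B.domain) :
    ⟪B x, (y : V)⟫ + ⟪(x : V), B y⟫ = 0 := by
  set z := ⟪B x, (y : V)⟫ + ⟪(x : V), B y⟫
  have hquad : ∀ t : ℝ,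
      0 ≤ (-(‖z‖ ^ 2 * re ⟪B y, (y : V)⟫)) * (t * t) + (-‖z‖ ^ 2) * t + 0 := by
    intro t
    have h := hB.re_inner_add_smul_le x y (t * conj z)
    rw [hx, mul_assoc, RCLike.conj_mul, ← ofReal_pow, ← ofReal_mul, ofReal_re, norm_mul,
      norm_conj, norm_ofReal, mul_pow, sq_abs] at h
    nlinarith
  have hdisc := discrim_le_zero hquad
  rw [discrim] at hdisc
  simpa using hdisc

/-- If `A₀` is a densely defined skew-symmetric operator and `B` is a dissipative operator
extending `A₀`, then `B ⊆ (-A₀)*`. -/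
theorem dissipative_extension_le_adjoint_neg (A₀ B : V →ₗ.[𝕜] V)
    (hdense : Dense (A₀.domain : Set V)) (hskew : SkewSymmetric A₀)
    (hB : Dissipative B) (hA₀B : A₀ ≤ B) :
    B ≤ (-A₀).adjoint := by
  refine LinearPMap.IsFormalAdjoint.le_adjoint hdense fun x y => ?_
  let x' : B.domain := ⟨x, hA₀B.1 x.2⟩
  have hBx : B x' = A₀ x := (hA₀B.2 rfl).symm
  have hx' : re ⟪B x', (x' : V)⟫ = 0 := hBx ▸ hskew.re_inner_self_eq_zero x
  have h := hB.inner_add_inner_eq_zero hx' y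
  rw [hBx] at h
  rw [LinearPMap.neg_apply, inner_neg_left, neg_eq_of_add_eq_zero_right h]
end

section
/- Let (H₋, H₊, Γ₋, Γ₊) be a boundary quadruple for a densely defined skew-symmetric operator A₀ on a Hilbert space V, and let A = (−A₀)*. For every x₋ ∈ Γ₋D(A) and every x₊ ∈ Γ₊D(A) there exists w ∈ D(A) such that Γ₋w = x₋ and Γ₊w = x₊ (interpolation property). -/
variable {𝕜 V : Type*} [RCLike 𝕜] [NormedAddCommGroup V] [InnerProductSpace 𝕜 V]
  [CompleteSpace V]

/-- A *boundary quadruple* `(H₋, H₊, Γ₋, Γ₊)` for a densely defined skew-symmetric operator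
`A₀` (here expressed via `A := (-A₀)*`) consists of pre-Hilbert spaces `H₋, H₊` and surjective
linear maps `Γ₋ : D(A) → H₋`, `Γ₊ : D(A) → H₊` such that
`⟪Au, v⟫ + ⟪u, Av⟫ = ⟪Γ₊u, Γ₊v⟫ - ⟪Γ₋u, Γ₋v⟫` for all `u, v ∈ D(A)` and
`ker Γ₋ + ker Γ₊ = D(A)`. -/
def IsBoundaryQuadruple (A : V →ₗ.[𝕜] V) {Hm Hp : Type*}
    [NormedAddCommGroup Hm] [InnerProductSpace 𝕜 Hm]
    [NormedAddCommGroup Hp] [InnerProductSpace 𝕜 Hp]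
    (Γm : A.domain →ₗ[𝕜] Hm) (Γp : A.domain →ₗ[𝕜] Hp) : Prop :=
  Function.Surjective Γm ∧ Function.Surjective Γp ∧
    (∀ u v : A.domain,
      @inner 𝕜 _ _ (A u) (v : V) + @inner 𝕜 _ _ (u : V) (A v) =
        @inner 𝕜 _ _ (Γp u) (Γp v) - @inner 𝕜 _ _ (Γm u) (Γm v)) ∧
    LinearMap.ker Γm ⊔ LinearMap.ker Γp = ⊤

theorem LinearMap.prod_surjective_of_sup_ker_eq_top {R M M₂ M₃ : Type*} [Ring R]
    [AddCommGroup M] [AddCommGroup M₂] [AddCommGroup M₃] [Module R M] [Module R M₂] [Module R M₃]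
    {f : M →ₗ[R] M₂} {g : M →ₗ[R] M₃} (hf : Function.Surjective f)
    (hg : Function.Surjective g) (h : LinearMap.ker f ⊔ LinearMap.ker g = ⊤) :
    Function.Surjective (f.prod g) := by
  rw [← LinearMap.range_eq_top, LinearMap.range_prod_eq h, LinearMap.range_eq_top.mpr hf,
    LinearMap.range_eq_top.mpr hg, Submodule.prod_top]

theorem boundaryQuadruple_interpolation_general {Hm Hp : Type*}
    [NormedAddCommGroup Hm] [InnerProductSpace 𝕜 Hm]
    [NormedAddCommGroup Hp] [InnerProductSpace 𝕜 Hp]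
    (A₀ : V →ₗ.[𝕜] V)
    (Γm : ((-A₀).adjoint).domain →ₗ[𝕜] Hm) (Γp : ((-A₀).adjoint).domain →ₗ[𝕜] Hp)
    (hq : IsBoundaryQuadruple (-A₀).adjoint Γm Γp) :
    ∀ (xm : Hm) (xp : Hp), ∃ w : ((-A₀).adjoint).domain, Γm w = xm ∧ Γp w = xp := by
  obtain ⟨hm, hp, -, hker⟩ := hq
  intro xm xp
  obtain ⟨w, hw⟩ := LinearMap.prod_surjective_of_sup_ker_eq_top hm hp hker (xm, xp)
  exact ⟨w, Prod.ext_iff.mp hw⟩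

/-- **Interpolation property**: given a boundary quadruple `(H₋, H₊, Γ₋, Γ₊)` for a densely
defined skew-symmetric operator `A₀`, for every `x₋ ∈ H₋ = Γ₋ D(A)` and `x₊ ∈ H₊ = Γ₊ D(A)`
there exists `w ∈ D(A)` with `Γ₋ w = x₋` and `Γ₊ w = x₊`. -/
theorem boundaryQuadruple_interpolation {Hm Hp : Type*}
    [NormedAddCommGroup Hm] [InnerProductSpace 𝕜 Hm]
    [NormedAddCommGroup Hp] [InnerProductSpace 𝕜 Hp]
    (A₀ : V →ₗ.[𝕜] V) (hdense : Dense (A₀.domain : Set V)) (hskew : SkewSymmetric A₀)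
    (Γm : ((-A₀).adjoint).domain →ₗ[𝕜] Hm) (Γp : ((-A₀).adjoint).domain →ₗ[𝕜] Hp)
    (hq : IsBoundaryQuadruple (-A₀).adjoint Γm Γp) :
    ∀ (xm : Hm) (xp : Hp), ∃ w : ((-A₀).adjoint).domain, Γm w = xm ∧ Γp w = xp :=
  boundaryQuadruple_interpolation_general A₀ Γm Γp hq
end

section
/- Let (H₋, H₊, Γ₋, Γ₊) be a boundary quadruple for a densely defined skew-symmetric operator A₀ on a Hilbert space V, and let A = (−A₀)*. Then Γ₋: D(A) → H₋ and Γ₊: D(A) → H₊ are continuous when D(A) is equipped with the graph norm ‖u‖²_{D(A)} = ‖u‖²_V + ‖Au‖²_V. -/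
variable {𝕜 V : Type*} [RCLike 𝕜] [NormedAddCommGroup V] [InnerProductSpace 𝕜 V]
  [CompleteSpace V]

open UniformSpace in
/-- Abstract closed-graph lemma: a linear map `S` from a Banach space into a pre-Hilbert
space is bounded provided every element of `H` is `S w` for some `w` such that
`e ↦ ⟪S e, S w⟫` is continuous. -/
lemma aux_bound {𝕜 E H : Type*} [RCLike 𝕜] [NormedAddCommGroup E] [NormedSpace 𝕜 E]
    [CompleteSpace E] [NormedAddCommGroup H] [InnerProductSpace 𝕜 H]
    (S : E →ₗ[𝕜] H)
    (hc : ∀ h : H, ∃ w : E, S w = h ∧ Continuous fun e : E => (inner 𝕜 (S e) (S w) : 𝕜)) :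
    ∃ C : ℝ, 0 ≤ C ∧ ∀ e : E, ‖S e‖ ≤ C * ‖e‖ := by
  let ι : H →ₗᵢ[𝕜] Completion H := Completion.toComplₗᵢ
  let T : E →ₗ[𝕜] Completion H := ι.toLinearMap.comp S
  have hTapp : ∀ e : E, T e = (S e : Completion H) := fun e => rfl
  have hcont : Continuous T := by
    apply T.continuous_of_seq_closed_graph
    intro u x y hux huy
    have key : ∀ h : H, (inner 𝕜 (y - T x) (h : Completion H) : 𝕜) = 0 := by
      intro h
      obtain ⟨w, hw, hwc⟩ := hc h
      have h1 : Filter.Tendsto (fun n => (inner 𝕜 (T (u n)) ((S w : Completion H)) : 𝕜))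
          Filter.atTop (nhds (inner 𝕜 (T x) ((S w : Completion H)))) := by
        have : Filter.Tendsto (fun n => (inner 𝕜 (S (u n)) (S w) : 𝕜))
            Filter.atTop (nhds (inner 𝕜 (S x) (S w))) :=
          (hwc.tendsto x).comp hux
        simpa only [hTapp, Completion.inner_coe] using this
      have h2 : Filter.Tendsto (fun n => (inner 𝕜 (T (u n)) ((S w : Completion H)) : 𝕜))
          Filter.atTop (nhds (inner 𝕜 y ((S w : Completion H)))) := by
        exact ((UniformSpace.Completion.Continuous.inner continuous_id'
          continuous_const).tendsto y).comp huy
      have := tendsto_nhds_unique h2 h1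
      rw [← hw, inner_sub_left, this, sub_self]
    have hy : y = T x := by
      have hclosed : IsClosed {z : Completion H | (inner 𝕜 (y - T x) z : 𝕜) = 0} :=
        isClosed_eq (UniformSpace.Completion.Continuous.inner continuous_const continuous_id')
          continuous_const
      have hall := isClosed_property Completion.denseRange_coe hclosed key (y - T x)
      rw [inner_self_eq_zero] at hall
      exact sub_eq_zero.mp hall
    exact hy
  let T' : E →L[𝕜] Completion H := ⟨T, hcont⟩
  refine ⟨‖T'‖, norm_nonneg _, fun e => ?_⟩
  have := T'.le_opNorm e
  have hn : ‖T' e‖ = ‖S e‖ := by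
    show ‖(S e : Completion H)‖ = ‖S e‖
    exact Completion.norm_coe _
  rwa [hn] at this

open LinearPMap in
/-- The graph of the adjoint of a densely defined operator is closed. -/
lemma adjoint_graph_isClosed (B : V →ₗ.[𝕜] V) (hB : Dense (B.domain : Set V)) :
    IsClosed ((B.adjoint).graph : Set (V × V)) := by
  have hset : ((B.adjoint).graph : Set (V × V)) =
      ⋂ x : B.domain, {p : V × V | (inner 𝕜 p.2 (x : V) : 𝕜) = inner 𝕜 p.1 (B x)} := by
    ext p
    simp only [Set.mem_iInter, Set.mem_setOf_eq, SetLike.mem_coe]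
    constructor
    · intro hp x
      rw [mem_graph_iff] at hp
      obtain ⟨y, hy1, hy2⟩ := hp
      rw [← hy1, ← hy2]
      exact adjoint_isFormalAdjoint hB y x
    · intro hp
      have hmem : p.1 ∈ B.adjoint.domain :=
        mem_adjoint_domain_of_exists _ ⟨p.2, fun x => hp x⟩
      rw [mem_graph_iff]
      exact ⟨⟨p.1, hmem⟩, rfl, adjoint_apply_eq hB _ (fun x => hp x)⟩
  rw [hset]
  refine isClosed_iInter fun x => isClosed_eq ?_ ?_
  · exact Continuous.inner continuous_snd continuous_const
  · exact Continuous.inner continuous_fst continuous_const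

lemma max_le_sqrt_sq_add_sq (a b : ℝ) (ha : 0 ≤ a) (hb : 0 ≤ b) :
    max a b ≤ Real.sqrt (a ^ 2 + b ^ 2) := by
  refine max_le ?_ ?_
  · have h1 := Real.sqrt_le_sqrt (show a ^ 2 ≤ a ^ 2 + b ^ 2 by nlinarith)
    rwa [Real.sqrt_sq ha] at h1
  · have h1 := Real.sqrt_le_sqrt (show b ^ 2 ≤ a ^ 2 + b ^ 2 by nlinarith)
    rwa [Real.sqrt_sq hb] at h1

lemma boundaryQuadruple_core {Hm Hp : Type*}
    [NormedAddCommGroup Hm] [InnerProductSpace 𝕜 Hm]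
    [NormedAddCommGroup Hp] [InnerProductSpace 𝕜 Hp]
    (A : V →ₗ.[𝕜] V) (hclosed : IsClosed (A.graph : Set (V × V)))
    (Γm : A.domain →ₗ[𝕜] Hm) (Γp : A.domain →ₗ[𝕜] Hp)
    (hq : IsBoundaryQuadruple A Γm Γp) :
    (∃ C : ℝ, ∀ u : A.domain,
        ‖Γm u‖ ≤ C * Real.sqrt (‖(u : V)‖ ^ 2 + ‖A u‖ ^ 2)) ∧
      ∃ C : ℝ, ∀ u : A.domain,
        ‖Γp u‖ ≤ C * Real.sqrt (‖(u : V)‖ ^ 2 + ‖A u‖ ^ 2) := by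
  obtain ⟨hΓmsurj, hΓpsurj, green, hker⟩ := hq
  haveI : CompleteSpace A.graph := completeSpace_coe_iff_isComplete.mpr hclosed.isComplete
  -- the linear equivalence between `D(A)` and the graph of `A`
  let φ₀ : A.domain →ₗ[𝕜] A.graph :=
    { toFun := fun u => ⟨((u : V), A u), A.mem_graph u⟩
      map_add' := fun u v => Subtype.ext (Prod.ext (by simp) (A.map_add u v))
      map_smul' := fun c u => Subtype.ext (Prod.ext (by simp) (A.map_smul c u)) }
  have hφbij : Function.Bijective φ₀ := by
    constructor
    · intro u v huv
      have : ((u : V), A u) = ((v : V), A v) := congrArg Subtype.val huv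
      exact Subtype.ext (congrArg Prod.fst this)
    · rintro ⟨p, hp⟩
      rw [LinearPMap.mem_graph_iff] at hp
      obtain ⟨y, hy1, hy2⟩ := hp
      exact ⟨y, Subtype.ext (Prod.ext hy1 hy2)⟩
  let φ : A.domain ≃ₗ[𝕜] A.graph := LinearEquiv.ofBijective φ₀ hφbij
  have hφ1 : ∀ e : A.graph, ((φ.symm e : A.domain) : V) = (e : V × V).1 := by
    intro e
    have : φ₀ (φ.symm e) = e := φ.apply_symm_apply e
    exact congrArg Prod.fst (congrArg Subtype.val this)
  have hφ2 : ∀ e : A.graph, A (φ.symm e) = (e : V × V).2 := by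
    intro e
    have : φ₀ (φ.symm e) = e := φ.apply_symm_apply e
    exact congrArg Prod.snd (congrArg Subtype.val this)
  have hφsymm : ∀ u : A.domain, φ.symm (φ₀ u) = u := fun u => φ.symm_apply_apply u
  -- decompositions
  have hdecp : ∀ h : Hp, ∃ a : A.domain, Γm a = 0 ∧ Γp a = h := by
    intro h
    obtain ⟨v, hv⟩ := hΓpsurj h
    have hv' : v ∈ LinearMap.ker Γm ⊔ LinearMap.ker Γp := by rw [hker]; trivial
    obtain ⟨a, ha, b, hb, hab⟩ := Submodule.mem_sup.mp hv'
    refine ⟨a, ha, ?_⟩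
    have : Γp v = Γp a + Γp b := by rw [← hab]; simp
    rw [LinearMap.mem_ker.mp hb, add_zero] at this
    rw [← this, hv]
  have hdecm : ∀ h : Hm, ∃ a : A.domain, Γp a = 0 ∧ Γm a = h := by
    intro h
    obtain ⟨v, hv⟩ := hΓmsurj h
    have hv' : v ∈ LinearMap.ker Γm ⊔ LinearMap.ker Γp := by rw [hker]; trivial
    obtain ⟨a, ha, b, hb, hab⟩ := Submodule.mem_sup.mp hv'
    refine ⟨b, hb, ?_⟩
    have : Γm v = Γm a + Γm b := by rw [← hab]; simp
    rw [LinearMap.mem_ker.mp ha, zero_add] at this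
    rw [← this, hv]
  -- norm bound on the graph
  have hnorm : ∀ u : A.domain,
      ‖φ₀ u‖ ≤ Real.sqrt (‖(u : V)‖ ^ 2 + ‖A u‖ ^ 2) := by
    intro u
    have h1 : ‖φ₀ u‖ = ‖((u : V), A u)‖ := rfl
    rw [h1, Prod.norm_def]
    exact max_le_sqrt_sq_add_sq _ _ (norm_nonneg _) (norm_nonneg _)
  constructor
  · -- Γm
    let S : A.graph →ₗ[𝕜] Hm := Γm.comp (φ.symm : A.graph →ₗ[𝕜] A.domain)
    have hS : ∀ u : A.domain, S (φ₀ u) = Γm u := by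
      intro u; show Γm (φ.symm (φ₀ u)) = Γm u; rw [hφsymm]
    obtain ⟨C, hC0, hC⟩ := aux_bound S (by
      intro h
      obtain ⟨a, hap, ham⟩ := hdecm h
      refine ⟨φ₀ a, by rw [hS, ham], ?_⟩
      have heq2 : (fun e : A.graph => (inner 𝕜 (S e) (S (φ₀ a)) : 𝕜)) =
          fun e : A.graph =>
            -((inner 𝕜 ((e : V × V).2) ((a : V)) : 𝕜) + inner 𝕜 ((e : V × V).1) (A a)) := by
        funext e
        have hg := green (φ.symm e) a
        rw [hφ1 e, hφ2 e, hap, inner_zero_right, zero_sub] at hg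
        rw [hS a]
        show (inner 𝕜 (Γm (φ.symm e)) (Γm a) : 𝕜) = _
        rw [hg, neg_neg]
      rw [heq2]
      refine Continuous.neg (Continuous.add ?_ ?_)
      · exact Continuous.inner (continuous_subtype_val.snd) continuous_const
      · exact Continuous.inner (continuous_subtype_val.fst) continuous_const)
    refine ⟨C, fun u => ?_⟩
    have := hC (φ₀ u)
    rw [hS u] at this
    exact this.trans (mul_le_mul_of_nonneg_left (hnorm u) hC0)
  · -- Γp
    let S : A.graph →ₗ[𝕜] Hp := Γp.comp (φ.symm : A.graph →ₗ[𝕜] A.domain)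
    have hS : ∀ u : A.domain, S (φ₀ u) = Γp u := by
      intro u; show Γp (φ.symm (φ₀ u)) = Γp u; rw [hφsymm]
    obtain ⟨C, hC0, hC⟩ := aux_bound S (by
      intro h
      obtain ⟨a, ham, hap⟩ := hdecp h
      refine ⟨φ₀ a, by rw [hS, hap], ?_⟩
      have heq2 : (fun e : A.graph => (inner 𝕜 (S e) (S (φ₀ a)) : 𝕜)) =
          fun e : A.graph =>
            (inner 𝕜 ((e : V × V).2) ((a : V)) : 𝕜) + inner 𝕜 ((e : V × V).1) (A a) := by
        funext e
        have hg := green (φ.symm e) a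
        rw [hφ1 e, hφ2 e, ham, inner_zero_right, sub_zero] at hg
        rw [hS a]
        show (inner 𝕜 (Γp (φ.symm e)) (Γp a) : 𝕜) = _
        rw [hg]
      rw [heq2]
      refine Continuous.add ?_ ?_
      · exact Continuous.inner (continuous_subtype_val.snd) continuous_const
      · exact Continuous.inner (continuous_subtype_val.fst) continuous_const)
    refine ⟨C, fun u => ?_⟩
    have := hC (φ₀ u)
    rw [hS u] at this
    exact this.trans (mul_le_mul_of_nonneg_left (hnorm u) hC0)

/-- The maps `Γ₋` and `Γ₊` of a boundary quadruple are automatically continuous for the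
graph norm `‖u‖²_{D(A)} = ‖u‖²_V + ‖Au‖²_V` on `D(A)`, i.e. they are bounded with respect
to the graph norm. -/
theorem boundaryQuadruple_continuous {Hm Hp : Type*}
    [NormedAddCommGroup Hm] [InnerProductSpace 𝕜 Hm]
    [NormedAddCommGroup Hp] [InnerProductSpace 𝕜 Hp]
    (A₀ : V →ₗ.[𝕜] V) (hdense : Dense (A₀.domain : Set V)) (hskew : SkewSymmetric A₀)
    (Γm : ((-A₀).adjoint).domain →ₗ[𝕜] Hm) (Γp : ((-A₀).adjoint).domain →ₗ[𝕜] Hp)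
    (hq : IsBoundaryQuadruple (-A₀).adjoint Γm Γp) :
    (∃ C : ℝ, ∀ u : ((-A₀).adjoint).domain,
        ‖Γm u‖ ≤ C * Real.sqrt (‖(u : V)‖ ^ 2 + ‖(-A₀).adjoint u‖ ^ 2)) ∧
      ∃ C : ℝ, ∀ u : ((-A₀).adjoint).domain,
        ‖Γp u‖ ≤ C * Real.sqrt (‖(u : V)‖ ^ 2 + ‖(-A₀).adjoint u‖ ^ 2) := by

  have hdense' : Dense ((-A₀).domain : Set V) := by
    rw [LinearPMap.neg_domain]; exact hdense
  exact boundaryQuadruple_core (-A₀).adjoint (adjoint_graph_isClosed (-A₀) hdense') Γm Γp hq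
end

section
/- Let (H₋, H₊, Γ₋, Γ₊) be a boundary quadruple for a densely defined skew-symmetric operator A₀ on a Hilbert space V. Then the pre-Hilbert spaces H₋ = Γ₋D(A) and H₊ = Γ₊D(A) are complete, i.e. they are Hilbert spaces. -/
variable {𝕜 V : Type*} [RCLike 𝕜] [NormedAddCommGroup V] [InnerProductSpace 𝕜 V]
  [CompleteSpace V]

section Aux

local notation "⟪" x ", " y "⟫" => @inner 𝕜 _ _ x y

open UniformSpace

set_option maxHeartbeats 1000000 in
private theorem aux_complete {Hm Hp : Type*}
    [NormedAddCommGroup Hm] [InnerProductSpace 𝕜 Hm]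
    [NormedAddCommGroup Hp] [InnerProductSpace 𝕜 Hp]
    (A : V →ₗ.[𝕜] V)
    (Γm : A.domain →ₗ[𝕜] Hm) (Γp : A.domain →ₗ[𝕜] Hp)
    (hsm : Function.Surjective Γm)
    (hgreen : ∀ u v : A.domain,
      ⟪A u, (v : V)⟫ + ⟪(u : V), A v⟫ = ⟪Γp u, Γp v⟫ - ⟪Γm u, Γm v⟫)
    (hsup : LinearMap.ker Γm ⊔ LinearMap.ker Γp = ⊤)
    (hmax : ∀ g : V, (∀ u : A.domain, Γm u = 0 → Γp u = 0 → ⟪g, (u : V) - A u⟫ = 0) →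
      ∃ h : A.domain, (h : V) = g ∧ A h = -g) :
    CompleteSpace Hm := by
  classical
  -- the operator `u ↦ u - A u` on the domain of `A`
  set S : A.domain →ₗ[𝕜] V := A.domain.subtype - A.toFun with hSdef
  have hSapp : ∀ u : A.domain, S u = (u : V) - A u := fun u => rfl
  -- surjectivity of `Γm` restricted to `ker Γp`
  have hsurjK : ∀ y : Hm, ∃ u : A.domain, Γp u = 0 ∧ Γm u = y := by
    intro y
    obtain ⟨w, rfl⟩ := hsm y
    have hw : w ∈ LinearMap.ker Γm ⊔ LinearMap.ker Γp := by rw [hsup]; trivial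
    obtain ⟨a, ha, b, hb, rfl⟩ := Submodule.mem_sup.mp hw
    refine ⟨b, LinearMap.mem_ker.mp hb, ?_⟩
    rw [map_add, LinearMap.mem_ker.mp ha, zero_add]
  -- the key identity for `S` on `ker Γp`
  have hS : ∀ u v : A.domain, Γp u = 0 → Γp v = 0 →
      ⟪S u, S v⟫ = ⟪(u : V), (v : V)⟫ + ⟪A u, A v⟫ + ⟪Γm u, Γm v⟫ := by
    intro u v hu hv
    have hg := hgreen u v
    rw [hu, hv, inner_zero_left] at hg
    rw [hSapp, hSapp, inner_sub_left, inner_sub_right, inner_sub_right]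
    linear_combination -hg
  have hnormsq : ∀ u : A.domain, Γp u = 0 →
      ‖S u‖ ^ 2 = ‖(u : V)‖ ^ 2 + ‖A u‖ ^ 2 + ‖Γm u‖ ^ 2 := by
    intro u hu
    have h2 := congrArg (RCLike.re (K := 𝕜)) (hS u u hu hu)
    simpa only [map_add, inner_self_eq_norm_sq] using h2
  have hbound : ∀ u : A.domain, Γp u = 0 → ‖Γm u‖ ≤ ‖S u‖ := by
    intro u hu
    have h1 := hnormsq u hu
    have h2 : ‖Γm u‖ ^ 2 ≤ ‖S u‖ ^ 2 := by nlinarith [sq_nonneg ‖(u : V)‖, sq_nonneg ‖A u‖]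
    calc ‖Γm u‖ = Real.sqrt (‖Γm u‖ ^ 2) := (Real.sqrt_sq (norm_nonneg _)).symm
      _ ≤ Real.sqrt (‖S u‖ ^ 2) := Real.sqrt_le_sqrt h2
      _ = ‖S u‖ := Real.sqrt_sq (norm_nonneg _)
  -- `S` restricted to `K := ker Γp`
  set K : Submodule 𝕜 A.domain := LinearMap.ker Γp with hKdef
  set T : K →ₗ[𝕜] V := S.comp K.subtype with hTdef
  have hTapp : ∀ u : K, T u = S (u : A.domain) := fun u => rfl
  have hT0 : ∀ u : K, T u = 0 → u = 0 := by
    intro u hu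
    have h1 := hnormsq (u : A.domain) (LinearMap.mem_ker.mp u.2)
    rw [← hTapp, hu, norm_zero] at h1
    have h2 : ‖((u : A.domain) : V)‖ ^ 2 ≤ 0 := by
      nlinarith [sq_nonneg ‖A (u : A.domain)‖, sq_nonneg ‖Γm (u : A.domain)‖]
    have h3 : ((u : A.domain) : V) = 0 := by
      have hn : ‖((u : A.domain) : V)‖ = 0 := by nlinarith [norm_nonneg ((u : A.domain) : V)]
      exact norm_eq_zero.mp hn
    have h4 : (u : A.domain) = 0 := Subtype.ext h3
    exact Subtype.ext h4
  have hTinj : Function.Injective T := by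
    intro a b hab
    have := hT0 (a - b) (by rw [map_sub, hab, sub_self])
    exact sub_eq_zero.mp this
  -- the range of `T`
  set R : Submodule 𝕜 V := LinearMap.range T with hRdef
  -- the general computation `⟪h, S u⟫ = ⟪Γm h, Γm u⟫` when `A h = -h`
  have hkey : ∀ h : A.domain, A h = -(h : V) → ∀ u : A.domain, Γp u = 0 →
      ⟪(h : V), S u⟫ = ⟪Γm h, Γm u⟫ := by
    intro h hh u hu
    have hg := hgreen u h
    rw [hu, inner_zero_left, hh] at hg
    have hc := congrArg (starRingEnd 𝕜) hg
    simp only [map_add, map_sub, inner_conj_symm, inner_neg_right, map_neg] at hc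
    rw [hSapp, inner_sub_right]
    simp only [map_zero] at hc
    linear_combination -hc
  -- density of the range of `T`
  have horth : Rᗮ = ⊥ := by
    rw [Submodule.eq_bot_iff]
    intro g hg
    have hg0 : ∀ u : A.domain, Γp u = 0 → ⟪g, S u⟫ = 0 := by
      intro u hu
      have h1 : ⟪S u, g⟫ = 0 :=
        (Submodule.mem_orthogonal R g).mp hg _ ⟨⟨u, LinearMap.mem_ker.mpr hu⟩, rfl⟩
      rw [← inner_conj_symm, h1, map_zero]
    obtain ⟨h, hh1, hh2⟩ := hmax g (fun u hm hp => by rw [← hSapp]; exact hg0 u hp)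
    have hh2' : A h = -(h : V) := by rw [hh2, hh1]
    have hmh : Γm h = 0 := by
      obtain ⟨u, hu, hmu⟩ := hsurjK (Γm h)
      have := hkey h hh2' u hu
      rw [hh1, hg0 u hu, hmu] at this
      exact inner_self_eq_zero.mp this.symm
    have hgg := hgreen h h
    rw [hh2', hh1, hmh, inner_zero_left, sub_zero] at hgg
    have hre := congrArg (RCLike.re (K := 𝕜)) hgg
    simp only [map_add, inner_neg_left, inner_neg_right, map_neg, inner_self_eq_norm_sq] at hre
    have : ‖g‖ ^ 2 ≤ 0 := by nlinarith [sq_nonneg ‖Γp h‖]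
    have hgn : ‖g‖ = 0 := by nlinarith [norm_nonneg g]
    exact norm_eq_zero.mp hgn
  have hRdense : Dense (R : Set V) := by
    have htop : R.topologicalClosure = ⊤ := Submodule.topologicalClosure_eq_top_iff.mpr horth
    rw [dense_iff_closure_eq, ← Submodule.topologicalClosure_coe, htop, Submodule.top_coe]
  -- surjectivity of the map to the completion
  have hsurj : Function.Surjective ((↑) : Hm → Completion Hm) := by
    intro x
    let e : K ≃ₗ[𝕜] R := LinearEquiv.ofInjective T hTinj
    have hecoe : ∀ u : K, ((e u : V)) = T u := fun u => rfl
    let q₀ : R →ₗ[𝕜] Hm := (Γm.comp K.subtype).comp (e.symm : R →ₗ[𝕜] K)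
    have hq₀ : ∀ u : K, q₀ (e u) = Γm (u : A.domain) := by
      intro u
      simp only [q₀, LinearMap.comp_apply, LinearEquiv.coe_coe, LinearEquiv.symm_apply_apply,
        Submodule.subtype_apply]
    have hq₀b : ∀ r : R, ‖q₀ r‖ ≤ 1 * ‖r‖ := by
      intro r
      obtain ⟨u, rfl⟩ := e.surjective r
      rw [hq₀, one_mul]
      have h1 : ‖(e u : V)‖ = ‖S (u : A.domain)‖ := by rw [hecoe, hTapp]
      calc ‖Γm (u : A.domain)‖ ≤ ‖S (u : A.domain)‖ :=
            hbound _ (LinearMap.mem_ker.mp u.2)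
        _ = ‖e u‖ := h1.symm
    let q : R →L[𝕜] Hm := q₀.mkContinuous 1 hq₀b
    let ψ : R →L[𝕜] 𝕜 := (innerSL 𝕜 x).comp ((UniformSpace.Completion.toComplL).comp q)
    let φ : V →L[𝕜] 𝕜 := ψ.extend R.subtypeL
    set g : V := (InnerProductSpace.toDual 𝕜 V).symm φ with hgdef
    have hgS : ∀ u : A.domain, Γp u = 0 →
        ⟪g, S u⟫ = ⟪x, ((Γm u : Hm) : Completion Hm)⟫ := by
      intro u hu
      have h1 : ⟪g, S u⟫ = φ (S u) := InnerProductSpace.toDual_symm_apply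
      have hmem : S u ∈ R := ⟨⟨u, LinearMap.mem_ker.mpr hu⟩, rfl⟩
      have h2 : φ (S u) = ψ ⟨S u, hmem⟩ :=
        ContinuousLinearMap.extend_eq (f := ψ) (e := R.subtypeL) hRdense.denseRange_val
          isUniformEmbedding_subtype_val.isUniformInducing ⟨S u, hmem⟩
      have h3 : q ⟨S u, hmem⟩ = Γm u := by
        have heq : (⟨S u, hmem⟩ : R) = e ⟨u, LinearMap.mem_ker.mpr hu⟩ := by
          apply Subtype.ext
          rw [hecoe]
          rfl
        show q₀ ⟨S u, hmem⟩ = Γm u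
        rw [heq, hq₀]
      rw [h1, h2]
      show ⟪x, ((q ⟨S u, hmem⟩ : Hm) : Completion Hm)⟫ = _
      rw [h3]
    obtain ⟨h, hh1, hh2⟩ := hmax g (by
      intro u hm hp
      rw [← hSapp, hgS u hp, hm]
      rw [show ((0 : Hm) : Completion Hm) = 0 from UniformSpace.Completion.coe_zero]
      exact inner_zero_right x)
    have hh2' : A h = -(h : V) := by rw [hh2, hh1]
    refine ⟨Γm h, ?_⟩
    have hx : ∀ y : Hm, (⟪x - ((Γm h : Hm) : Completion Hm), (y : Completion Hm)⟫ : 𝕜) = 0 := by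
      intro y
      obtain ⟨u, hu, rfl⟩ := hsurjK y
      have h1 := hkey h hh2' u hu
      rw [hh1, hgS u hu] at h1
      rw [inner_sub_left, h1, UniformSpace.Completion.inner_coe]
      ring
    have heq : (fun z : Completion Hm => (⟪x - ((Γm h : Hm) : Completion Hm), z⟫ : 𝕜)) =
        fun _ => 0 := by
      apply UniformSpace.Completion.denseRange_coe.equalizer
      · exact (innerSL 𝕜 _).continuous
      · exact continuous_const
      · funext y
        exact hx y
    have h0 := congrFun heq (x - ((Γm h : Hm) : Completion Hm))
    have h1 : x - ((Γm h : Hm) : Completion Hm) = 0 := inner_self_eq_zero.mp h0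
    rw [sub_eq_zero] at h1
    exact h1.symm
  exact ((UniformSpace.Completion.isUniformInducing_coe Hm).completeSpace_congr hsurj).mpr
    inferInstance

end Aux

section Main

local notation "⟪" x ", " y "⟫" => @inner 𝕜 _ _ x y

/-- The pre-Hilbert spaces `H₋ = Γ₋ D(A)` and `H₊ = Γ₊ D(A)` of a boundary quadruple for a
densely defined skew-symmetric operator are automatically complete, i.e. Hilbert spaces. -/
theorem boundaryQuadruple_complete {Hm Hp : Type*}
    [NormedAddCommGroup Hm] [InnerProductSpace 𝕜 Hm]
    [NormedAddCommGroup Hp] [InnerProductSpace 𝕜 Hp]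
    (A₀ : V →ₗ.[𝕜] V) (hdense : Dense (A₀.domain : Set V)) (hskew : SkewSymmetric A₀)
    (Γm : ((-A₀).adjoint).domain →ₗ[𝕜] Hm) (Γp : ((-A₀).adjoint).domain →ₗ[𝕜] Hp)
    (hq : IsBoundaryQuadruple (-A₀).adjoint Γm Γp) :
    CompleteSpace Hm ∧ CompleteSpace Hp := by
  obtain ⟨hsm, hsp, hgreen, hsup⟩ := hq
  have hdense' : Dense (((-A₀).domain : Submodule 𝕜 V) : Set V) := hdense
  -- `D(A₀) ⊆ D((-A₀).adjoint)`
  have hskew' : ∀ (x : A₀.domain) (v : (-A₀).domain),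
      ⟪A₀ x, ((v : V))⟫ = ⟪(x : V), (-A₀) v⟫ := by
    intro x v
    rw [LinearPMap.neg_apply, inner_neg_right]
    linear_combination hskew x v
  have hmem0 : ∀ x : A₀.domain, (x : V) ∈ (-A₀).adjoint.domain := by
    intro x
    exact LinearPMap.mem_adjoint_domain_of_exists _ ⟨A₀ x, hskew' x⟩
  have hval0 : ∀ x : A₀.domain, (-A₀).adjoint ⟨(x : V), hmem0 x⟩ = A₀ x := by
    intro x
    exact LinearPMap.adjoint_apply_eq hdense' _ (hskew' x)
  have hfa := LinearPMap.adjoint_isFormalAdjoint hdense' (T := -A₀)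
  have hzero : ∀ (x : A₀.domain) (v : (-A₀).adjoint.domain),
      ⟪(-A₀).adjoint ⟨(x : V), hmem0 x⟩, (v : V)⟫ + ⟪((x : V)), (-A₀).adjoint v⟫ = 0 := by
    intro x v
    have h1 := hfa v x
    have h2 := congrArg (starRingEnd 𝕜) h1
    simp only [inner_conj_symm] at h2
    rw [LinearPMap.neg_apply, inner_neg_left] at h2
    rw [hval0, h2]
    ring
  -- mixed surjectivity
  have hsurjKp : ∀ y : Hp, ∃ v : (-A₀).adjoint.domain, Γm v = 0 ∧ Γp v = y := by
    intro y
    obtain ⟨w, rfl⟩ := hsp y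
    have hw : w ∈ LinearMap.ker Γm ⊔ LinearMap.ker Γp := by rw [hsup]; trivial
    obtain ⟨a, ha, b, hb, rfl⟩ := Submodule.mem_sup.mp hw
    refine ⟨a, LinearMap.mem_ker.mp ha, ?_⟩
    rw [map_add, LinearMap.mem_ker.mp hb, add_zero]
  have hsurjKm : ∀ y : Hm, ∃ v : (-A₀).adjoint.domain, Γp v = 0 ∧ Γm v = y := by
    intro y
    obtain ⟨w, rfl⟩ := hsm y
    have hw : w ∈ LinearMap.ker Γm ⊔ LinearMap.ker Γp := by rw [hsup]; trivial
    obtain ⟨a, ha, b, hb, rfl⟩ := Submodule.mem_sup.mp hw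
    refine ⟨b, LinearMap.mem_ker.mp hb, ?_⟩
    rw [map_add, LinearMap.mem_ker.mp ha, zero_add]
  -- elements of `D(A₀)` are in the kernel of both boundary maps
  have hker0 : ∀ x : A₀.domain,
      Γm ⟨(x : V), hmem0 x⟩ = 0 ∧ Γp ⟨(x : V), hmem0 x⟩ = 0 := by
    intro x
    set u₀ : (-A₀).adjoint.domain := ⟨(x : V), hmem0 x⟩ with hu₀
    have hgz : ∀ v : (-A₀).adjoint.domain, ⟪Γp u₀, Γp v⟫ - ⟪Γm u₀, Γm v⟫ = 0 := by
      intro v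
      rw [← hgreen u₀ v]
      exact hzero x v
    constructor
    · obtain ⟨v, hv1, hv2⟩ := hsurjKm (Γm u₀)
      have := hgz v
      rw [hv1, hv2, inner_zero_right] at this
      have h0 : ⟪Γm u₀, Γm u₀⟫ = 0 := by linear_combination -this
      exact inner_self_eq_zero.mp h0
    · obtain ⟨v, hv1, hv2⟩ := hsurjKp (Γp u₀)
      have := hgz v
      rw [hv1, hv2, inner_zero_right] at this
      have h0 : ⟪Γp u₀, Γp u₀⟫ = 0 := by linear_combination this
      exact inner_self_eq_zero.mp h0
  constructor
  · -- completeness of `Hm`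
    apply aux_complete (-A₀).adjoint Γm Γp hsm hgreen hsup
    intro g hg
    have hgx : ∀ x : A₀.domain, ⟪(-g), ((x : V))⟫ = ⟪g, (-A₀) x⟫ := by
      intro x
      have h1 := hg ⟨(x : V), hmem0 x⟩ (hker0 x).1 (hker0 x).2
      rw [hval0] at h1
      rw [inner_sub_right] at h1
      rw [LinearPMap.neg_apply, inner_neg_right, inner_neg_left]
      linear_combination -h1
    have hmem : g ∈ (-A₀).adjoint.domain := LinearPMap.mem_adjoint_domain_of_exists _ ⟨-g, hgx⟩
    have hval : (-A₀).adjoint ⟨g, hmem⟩ = -g := LinearPMap.adjoint_apply_eq hdense' _ hgx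
    exact ⟨⟨g, hmem⟩, rfl, hval⟩
  · -- completeness of `Hp`, by applying the lemma to `-(-A₀).adjoint` with the roles swapped
    have hgreen' : ∀ u v : (-(-A₀).adjoint).domain,
        ⟪(-(-A₀).adjoint) u, ((v : V))⟫ + ⟪((u : V)), (-(-A₀).adjoint) v⟫ = ⟪Γp u, Γp v⟫ - ⟪Γm u, Γm v⟫ →
        True := fun _ _ _ => trivial
    apply aux_complete (-(-A₀).adjoint) Γp Γm hsp ?_ ?_ ?_
    · intro u v
      rw [LinearPMap.neg_apply, LinearPMap.neg_apply, inner_neg_left, inner_neg_right]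
      linear_combination -hgreen u v
    · rw [sup_comm]; exact hsup
    · intro g hg
      have hgx : ∀ x : A₀.domain, ⟪g, ((x : V))⟫ = ⟪g, (-A₀) x⟫ := by
        intro x
        have h1 := hg ⟨(x : V), hmem0 x⟩ (hker0 x).2 (hker0 x).1
        rw [LinearPMap.neg_apply, hval0] at h1
        rw [sub_neg_eq_add, inner_add_right] at h1
        rw [LinearPMap.neg_apply, inner_neg_right]
        linear_combination h1
      have hmem : g ∈ (-A₀).adjoint.domain := LinearPMap.mem_adjoint_domain_of_exists _ ⟨g, hgx⟩
      have hval : (-A₀).adjoint ⟨g, hmem⟩ = g := LinearPMap.adjoint_apply_eq hdense' _ hgx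
      refine ⟨⟨g, hmem⟩, rfl, ?_⟩
      rw [LinearPMap.neg_apply]
      show -((-A₀).adjoint ⟨g, hmem⟩) = -g
      rw [hval]

end Main
end

section
/- Let (H₋, H₊, Γ₋, Γ₊) be a boundary quadruple for a densely defined skew-symmetric operator A₀ on a Hilbert space V, let A = (−A₀)* and let Ā₀ be the closure of A₀. Then D(Ā₀) = ker Γ₊ ∩ ker Γ₋, and Ā₀w = Aw for all w ∈ D(Ā₀). -/
variable {𝕜 V : Type*} [RCLike 𝕜] [NormedAddCommGroup V] [InnerProductSpace 𝕜 V]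
  [CompleteSpace V]

set_option linter.unusedSectionVars false

local notation "⟪" x ", " y "⟫" => @inner 𝕜 _ _ x y

theorem aux_equiv_symm_fst {α β : Type*} (x : α × β) :
    (WithLp.ofLp ((WithLp.equiv 2 (α × β)).symm x)).1 = x.1 := rfl

theorem aux_equiv_symm_snd {α β : Type*} (x : α × β) :
    (WithLp.ofLp ((WithLp.equiv 2 (α × β)).symm x)).2 = x.2 := rfl

theorem aux_graph_adjoint_mem_iff (A₀ : V →ₗ.[𝕜] V) (hdense : Dense (A₀.domain : Set V))
    (p : V × V) :
    p ∈ (-A₀).adjoint.graph ↔ ∀ u : A₀.domain, ⟪p.2, (u : V)⟫ + ⟪p.1, A₀ u⟫ = 0 := by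
  have hdense' : Dense ((-A₀).domain : Set V) := hdense
  constructor
  · rintro hp u
    rw [LinearPMap.mem_graph_iff] at hp
    obtain ⟨y, hy1, hy2⟩ := hp
    have := (LinearPMap.adjoint_isFormalAdjoint hdense') y (u : (-A₀).domain)
    rw [LinearPMap.neg_apply, inner_neg_right] at this
    rw [← hy1, ← hy2, this]
    ring
  · intro h
    have hmem : p.1 ∈ (-A₀).adjoint.domain := by
      apply LinearPMap.mem_adjoint_domain_of_exists
      refine ⟨p.2, fun x => ?_⟩
      rw [LinearPMap.neg_apply, inner_neg_right]
      linear_combination h x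
    have : (-A₀).adjoint ⟨p.1, hmem⟩ = p.2 := by
      apply LinearPMap.adjoint_apply_eq hdense'
      intro x
      rw [LinearPMap.neg_apply, inner_neg_right]
      linear_combination h x
    rw [LinearPMap.mem_graph_iff]
    exact ⟨⟨p.1, hmem⟩, rfl, this⟩

theorem aux_adjoint_isClosed (A₀ : V →ₗ.[𝕜] V) (hdense : Dense (A₀.domain : Set V)) :
    (-A₀).adjoint.IsClosed := by
  have : ((-A₀).adjoint.graph : Set (V × V)) =
      ⋂ u : A₀.domain, {p : V × V | ⟪p.2, (u : V)⟫ + ⟪p.1, A₀ u⟫ = 0} := by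
    ext p
    simp only [SetLike.mem_coe, aux_graph_adjoint_mem_iff A₀ hdense, Set.mem_iInter,
      Set.mem_setOf_eq]
  rw [LinearPMap.IsClosed, this]
  refine isClosed_iInter fun u => isClosed_eq ?_ continuous_const
  exact ((continuous_snd.inner continuous_const)).add (continuous_fst.inner continuous_const)

/-- The graph of `A₀` as a submodule of the Hilbert space `WithLp 2 (V × V)`. -/
noncomputable def auxG (A₀ : V →ₗ.[𝕜] V) : Submodule 𝕜 (WithLp 2 (V × V)) :=
  A₀.graph.comap (WithLp.linearEquiv 2 𝕜 (V × V)).toLinearMap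

theorem mem_auxG_iff (A₀ : V →ₗ.[𝕜] V) (q : WithLp 2 (V × V)) :
    q ∈ auxG A₀ ↔ (q.ofLp.1, q.ofLp.2) ∈ A₀.graph := by
  rw [auxG, Submodule.mem_comap]
  rfl

theorem mem_auxG_orth_iff (A₀ : V →ₗ.[𝕜] V) (p : WithLp 2 (V × V)) :
    p ∈ (auxG A₀)ᗮ ↔ ∀ u : A₀.domain, ⟪(u : V), p.ofLp.1⟫ + ⟪A₀ u, p.ofLp.2⟫ = 0 := by
  rw [Submodule.mem_orthogonal]
  constructor
  · intro h u
    have hm : ((WithLp.equiv 2 (V × V)).symm ((u : V), A₀ u)) ∈ auxG A₀ := by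
      rw [mem_auxG_iff]
      exact A₀.mem_graph u
    have := h _ hm
    rwa [WithLp.prod_inner_apply, aux_equiv_symm_fst, aux_equiv_symm_snd] at this
  · intro h q hq
    rw [mem_auxG_iff, LinearPMap.mem_graph_iff] at hq
    obtain ⟨u, hu1, hu2⟩ := hq
    rw [WithLp.prod_inner_apply, ← hu1, ← hu2]
    exact h u

theorem mem_auxG_topologicalClosure_iff (A₀ : V →ₗ.[𝕜] V) (q : WithLp 2 (V × V)) :
    q ∈ (auxG A₀).topologicalClosure ↔ (q.ofLp.1, q.ofLp.2) ∈ A₀.graph.topologicalClosure := by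
  have he : ((auxG A₀ : Set (WithLp 2 (V × V)))) =
      (WithLp.prodContinuousLinearEquiv 2 𝕜 V V).toHomeomorph ⁻¹' (A₀.graph : Set (V × V)) := by
    ext x
    rw [SetLike.mem_coe, mem_auxG_iff]
    rfl
  rw [← SetLike.mem_coe, ← SetLike.mem_coe, Submodule.topologicalClosure_coe,
    Submodule.topologicalClosure_coe, he, ← Homeomorph.preimage_closure]
  rfl

/-- Given a boundary quadruple `(H₋, H₊, Γ₋, Γ₊)` for a densely defined skew-symmetric
operator `A₀` with closure `Ā₀` and `A = (-A₀)*`, one has `D(Ā₀) = ker Γ₊ ∩ ker Γ₋` and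
`Ā₀ w = A w` for all `w ∈ D(Ā₀)`. -/
theorem closure_domain_eq_ker_inter {Hm Hp : Type*}
    [NormedAddCommGroup Hm] [InnerProductSpace 𝕜 Hm]
    [NormedAddCommGroup Hp] [InnerProductSpace 𝕜 Hp]
    (A₀ : V →ₗ.[𝕜] V) (hdense : Dense (A₀.domain : Set V)) (hskew : SkewSymmetric A₀)
    (Γm : ((-A₀).adjoint).domain →ₗ[𝕜] Hm) (Γp : ((-A₀).adjoint).domain →ₗ[𝕜] Hp)
    (hq : IsBoundaryQuadruple (-A₀).adjoint Γm Γp) :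
    (∀ x : V, x ∈ A₀.closure.domain ↔
        ∃ hx : x ∈ ((-A₀).adjoint).domain, Γp ⟨x, hx⟩ = 0 ∧ Γm ⟨x, hx⟩ = 0) ∧
      ∀ (w : V) (hw₀ : w ∈ A₀.closure.domain) (hw : w ∈ ((-A₀).adjoint).domain),
        A₀.closure ⟨w, hw₀⟩ = (-A₀).adjoint ⟨w, hw⟩ := by
  obtain ⟨hΓmsurj, hΓpsurj, hid, hsup⟩ := hq
  have hdense' : Dense ((-A₀).domain : Set V) := hdense
  have hA₀leA : A₀ ≤ (-A₀).adjoint := by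
    have h : (-A₀).IsFormalAdjoint A₀ := by
      intro x y
      have := hskew x y
      rw [LinearPMap.neg_apply, inner_neg_left]
      linear_combination -this
    exact h.le_adjoint hdense'
  have hAclosed := aux_adjoint_isClosed A₀ hdense
  have hclosable : A₀.IsClosable := hAclosed.isClosable.leIsClosable hA₀leA
  have hgcl : A₀.graph.topologicalClosure = A₀.closure.graph :=
    hclosable.graph_closure_eq_closure_graph
  have hclle : A₀.closure ≤ (-A₀).adjoint := by
    apply LinearPMap.le_of_le_graph
    rw [← hgcl]
    exact A₀.graph.topologicalClosure_minimal (LinearPMap.le_graph_of_le hA₀leA) hAclosed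
  -- elements of Gᗮ of the form (A v, v)
  have hGorth : ∀ v : ((-A₀).adjoint).domain,
      ((WithLp.equiv 2 (V × V)).symm ((-A₀).adjoint v, (v : V))) ∈ (auxG A₀)ᗮ := by
    intro v
    rw [mem_auxG_orth_iff]
    intro u
    rw [aux_equiv_symm_fst, aux_equiv_symm_snd]
    have := (LinearPMap.adjoint_isFormalAdjoint hdense') v (u : (-A₀).domain)
    rw [LinearPMap.neg_apply, inner_neg_right] at this
    have hconj := congrArg (starRingEnd 𝕜) this
    rw [map_neg, inner_conj_symm, inner_conj_symm] at hconj
    linear_combination hconj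
  -- key identity for elements of the closure domain
  have key : ∀ (w : V) (hw₀ : w ∈ A₀.closure.domain) (hw : w ∈ ((-A₀).adjoint).domain),
      ∀ v : ((-A₀).adjoint).domain,
        ⟪(-A₀).adjoint v, w⟫ + ⟪(v : V), (-A₀).adjoint ⟨w, hw⟩⟫ = 0 := by
    intro w hw₀ hw v
    have hval : A₀.closure ⟨w, hw₀⟩ = (-A₀).adjoint ⟨w, hw⟩ := hclle.2 rfl
    have hmem : ((WithLp.equiv 2 (V × V)).symm (w, (-A₀).adjoint ⟨w, hw⟩))
        ∈ (auxG A₀).topologicalClosure := by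
      rw [mem_auxG_topologicalClosure_iff, aux_equiv_symm_fst, aux_equiv_symm_snd, hgcl,
        ← hval]
      exact A₀.closure.mem_graph ⟨w, hw₀⟩
    rw [← (auxG A₀).orthogonal_orthogonal_eq_closure, Submodule.mem_orthogonal] at hmem
    have := hmem _ (hGorth v)
    rwa [WithLp.prod_inner_apply, aux_equiv_symm_fst, aux_equiv_symm_fst,
      aux_equiv_symm_snd, aux_equiv_symm_snd] at this
  -- boundary maps vanish on the closure domain
  have hzero : ∀ (w : V) (hw₀ : w ∈ A₀.closure.domain) (hw : w ∈ ((-A₀).adjoint).domain),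
      Γp ⟨w, hw⟩ = 0 ∧ Γm ⟨w, hw⟩ = 0 := by
    intro w hw₀ hw
    have hbd : ∀ v : ((-A₀).adjoint).domain,
        (⟪Γp ⟨w, hw⟩, Γp v⟫ : 𝕜) = ⟪Γm ⟨w, hw⟩, Γm v⟫ := by
      intro v
      have h1 := hid ⟨w, hw⟩ v
      have h2 := key w hw₀ hw v
      have h3 := congrArg (starRingEnd 𝕜) h2
      rw [map_add, inner_conj_symm, inner_conj_symm, map_zero] at h3
      linear_combination h3 - h1
    constructor
    · obtain ⟨z, hz⟩ := hΓpsurj (Γp ⟨w, hw⟩)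
      have hztop : z ∈ LinearMap.ker Γm ⊔ LinearMap.ker Γp := by
        rw [hsup]; trivial
      obtain ⟨z₁, hz₁, z₂, hz₂, hzz⟩ := Submodule.mem_sup.mp hztop
      have hΓpz₁ : Γp z₁ = Γp ⟨w, hw⟩ := by
        have h4 := congrArg Γp hzz
        rw [map_add, LinearMap.mem_ker.mp hz₂, add_zero] at h4
        rw [h4, hz]
      have h5 := hbd z₁
      rw [hΓpz₁, LinearMap.mem_ker.mp hz₁, inner_zero_right] at h5
      exact inner_self_eq_zero.mp h5
    · obtain ⟨z, hz⟩ := hΓmsurj (Γm ⟨w, hw⟩)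
      have hztop : z ∈ LinearMap.ker Γm ⊔ LinearMap.ker Γp := by
        rw [hsup]; trivial
      obtain ⟨z₁, hz₁, z₂, hz₂, hzz⟩ := Submodule.mem_sup.mp hztop
      have hΓmz₂ : Γm z₂ = Γm ⟨w, hw⟩ := by
        have h4 := congrArg Γm hzz
        rw [map_add, LinearMap.mem_ker.mp hz₁, zero_add] at h4
        rw [h4, hz]
      have h5 := hbd z₂
      rw [hΓmz₂, LinearMap.mem_ker.mp hz₂, inner_zero_right] at h5
      exact inner_self_eq_zero.mp h5.symm
  -- reverse inclusion
  have hback : ∀ (x : V) (hx : x ∈ ((-A₀).adjoint).domain), Γp ⟨x, hx⟩ = 0 → Γm ⟨x, hx⟩ = 0 →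
      (x, (-A₀).adjoint ⟨x, hx⟩) ∈ A₀.closure.graph := by
    intro x hx hp0 hm0
    rw [← hgcl]
    have := (mem_auxG_topologicalClosure_iff A₀
      ((WithLp.equiv 2 (V × V)).symm (x, (-A₀).adjoint ⟨x, hx⟩))).mp ?_
    · rwa [aux_equiv_symm_fst, aux_equiv_symm_snd] at this
    rw [← (auxG A₀).orthogonal_orthogonal_eq_closure, Submodule.mem_orthogonal]
    intro p hp
    rw [mem_auxG_orth_iff] at hp
    have hpg : (p.ofLp.2, p.ofLp.1) ∈ (-A₀).adjoint.graph := by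
      rw [aux_graph_adjoint_mem_iff A₀ hdense]
      intro u
      have h6 := congrArg (starRingEnd 𝕜) (hp u)
      rw [map_add, inner_conj_symm, inner_conj_symm, map_zero] at h6
      exact h6
    rw [LinearPMap.mem_graph_iff] at hpg
    obtain ⟨v, hv1, hv2⟩ := hpg
    have hv1' : (v : V) = p.ofLp.2 := hv1
    have hv2' : (-A₀).adjoint v = p.ofLp.1 := hv2
    rw [WithLp.prod_inner_apply, aux_equiv_symm_fst, aux_equiv_symm_snd]
    show ⟪p.ofLp.1, x⟫ + ⟪p.ofLp.2, (-A₀).adjoint ⟨x, hx⟩⟫ = 0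
    rw [← hv1', ← hv2']
    have h7 := hid v ⟨x, hx⟩
    rw [hp0, hm0, inner_zero_right, inner_zero_right, sub_zero] at h7
    exact h7
  refine ⟨fun x => ⟨fun hx₀ => ?_, fun ⟨hx, hp0, hm0⟩ => ?_⟩,
    fun w hw₀ hw => hclle.2 rfl⟩
  · exact ⟨hclle.1 hx₀, hzero x hx₀ (hclle.1 hx₀)⟩
  · exact LinearPMap.mem_domain_of_mem_graph (hback x hx hp0 hm0)
end

section
/- Let (H₋, H₊, Γ₋, Γ₊) be a boundary quadruple for a densely defined skew-symmetric operator A₀ on a Hilbert space V, with A = (−A₀)*. If Φ₁, Φ₂ : H₋ → H₊ are linear contractions such that A_{Φ₁} ⊆ A_{Φ₂}, then Φ₁ = Φ₂. -/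
variable {𝕜 V : Type*} [RCLike 𝕜] [NormedAddCommGroup V] [InnerProductSpace 𝕜 V]
  [CompleteSpace V]

/-! The boundary map `w ↦ (Γ₋ w, Γ₊ w)` is onto `H₋ × H₊`, so every `x ∈ H₋` is `Γ₋ w` for some
`w ∈ D(A_{Φ₁})`, and then `Φ₂ x = Γ₊ w = Φ₁ x`. -/

omit [CompleteSpace V] in
theorem IsBoundaryQuadruple.exists_boundary_values {A : V →ₗ.[𝕜] V} {Hm Hp : Type*}
    [NormedAddCommGroup Hm] [InnerProductSpace 𝕜 Hm]
    [NormedAddCommGroup Hp] [InnerProductSpace 𝕜 Hp]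
    {Γm : A.domain →ₗ[𝕜] Hm} {Γp : A.domain →ₗ[𝕜] Hp} (hq : IsBoundaryQuadruple A Γm Γp)
    (x : Hm) (y : Hp) : ∃ w, Γm w = x ∧ Γp w = y := by
  obtain ⟨hΓm, hΓp, -, hker⟩ := hq
  have hxy : (x, y) ∈ LinearMap.range (Γm.prod Γp) := by
    rw [LinearMap.range_prod_eq hker, LinearMap.range_eq_top.mpr hΓm,
      LinearMap.range_eq_top.mpr hΓp]
    exact ⟨trivial, trivial⟩
  obtain ⟨w, hw⟩ := hxy
  exact ⟨w, congrArg Prod.fst hw, congrArg Prod.snd hw⟩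

/-- `hsub` encodes `A_{Φ₁} ⊆ A_{Φ₂}`: both operators act as `A`, so only their domains differ. -/
theorem contraction_determined_by_extension_general {Hm Hp : Type*}
    [NormedAddCommGroup Hm] [InnerProductSpace 𝕜 Hm]
    [NormedAddCommGroup Hp] [InnerProductSpace 𝕜 Hp]
    (A₀ : V →ₗ.[𝕜] V)
    (Γm : ((-A₀).adjoint).domain →ₗ[𝕜] Hm) (Γp : ((-A₀).adjoint).domain →ₗ[𝕜] Hp)
    (hq : IsBoundaryQuadruple (-A₀).adjoint Γm Γp)
    (Φ₁ Φ₂ : Hm →ₗ[𝕜] Hp)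
    (hsub : ∀ w : ((-A₀).adjoint).domain, Φ₁ (Γm w) = Γp w → Φ₂ (Γm w) = Γp w) :
    Φ₁ = Φ₂ := by
  ext x
  obtain ⟨w, hwm, hwp⟩ := hq.exists_boundary_values x (Φ₁ x)
  have h := hsub w (by rw [hwm, hwp])
  rwa [hwm, hwp, eq_comm] at h

/-- The operator `A_Φ` determines the contraction `Φ`: if `Φ₁, Φ₂ : H₋ → H₊` are linear
contractions with `A_{Φ₁} ⊆ A_{Φ₂}` (i.e. every `w ∈ D(A)` with `Φ₁ Γ₋ w = Γ₊ w` also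
satisfies `Φ₂ Γ₋ w = Γ₊ w`), then `Φ₁ = Φ₂`. -/
theorem contraction_determined_by_extension {Hm Hp : Type*}
    [NormedAddCommGroup Hm] [InnerProductSpace 𝕜 Hm]
    [NormedAddCommGroup Hp] [InnerProductSpace 𝕜 Hp]
    (A₀ : V →ₗ.[𝕜] V) (hdense : Dense (A₀.domain : Set V)) (hskew : SkewSymmetric A₀)
    (Γm : ((-A₀).adjoint).domain →ₗ[𝕜] Hm) (Γp : ((-A₀).adjoint).domain →ₗ[𝕜] Hp)
    (hq : IsBoundaryQuadruple (-A₀).adjoint Γm Γp)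
    (Φ₁ Φ₂ : Hm →ₗ[𝕜] Hp)
    (hΦ₁ : ∀ x, ‖Φ₁ x‖ ≤ ‖x‖) (hΦ₂ : ∀ x, ‖Φ₂ x‖ ≤ ‖x‖)
    (hsub : ∀ w : ((-A₀).adjoint).domain, Φ₁ (Γm w) = Γp w → Φ₂ (Γm w) = Γp w) :
    Φ₁ = Φ₂ :=
  contraction_determined_by_extension_general A₀ Γm Γp hq Φ₁ Φ₂ hsub
end

section
/- Let (H₋, H₊, Γ₋, Γ₊) be a boundary quadruple for a densely defined skew-symmetric operator A₀ on a Hilbert space V, with A = (−A₀)* and closure Ā₀. The following assertions are equivalent: (i) ⟨Au, v⟩ + ⟨u, Av⟩ = 0 for all u, v ∈ D(A); (ii) Γ₋ = 0 and Γ₊ = 0; (iii) Ā₀ = A; (iv) −A* = A. -/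
variable {𝕜 V : Type*} [RCLike 𝕜] [NormedAddCommGroup V] [InnerProductSpace 𝕜 V]
  [CompleteSpace V]

local notation "⟪" x ", " y "⟫" => @inner 𝕜 _ _ x y

open LinearPMap

/-- The adjoint of a densely defined operator is closed. -/
lemma aux_adjoint_isClosed_s11 {T : V →ₗ.[𝕜] V} (hT : Dense (T.domain : Set V)) :
    T.adjoint.IsClosed := by
  have hgraph : (T.adjoint.graph : Set (V × V)) =
      ⋂ x : T.domain, {p : V × V | ⟪p.2, (x : V)⟫ = ⟪p.1, T x⟫} := by
    ext p
    simp only [Set.mem_iInter, Set.mem_setOf_eq, SetLike.mem_coe, mem_graph_iff]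
    constructor
    · rintro ⟨y, hy1, hy2⟩ x
      rw [← hy1, ← hy2]
      exact adjoint_isFormalAdjoint hT y x
    · intro h
      have hmem : p.1 ∈ T.adjoint.domain :=
        mem_adjoint_domain_of_exists _ ⟨p.2, fun x => h x⟩
      refine ⟨⟨p.1, hmem⟩, rfl, ?_⟩
      exact adjoint_apply_eq hT ⟨p.1, hmem⟩ fun x => h x
  rw [LinearPMap.IsClosed, hgraph]
  exact isClosed_iInter fun x =>
    isClosed_eq (Continuous.inner continuous_snd continuous_const)
      (Continuous.inner continuous_fst continuous_const)

omit [CompleteSpace V] in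
lemma aux_closure_eq_self {f : V →ₗ.[𝕜] V} (hf : f.IsClosed) : f.closure = f := by
  apply LinearPMap.eq_of_eq_graph
  rw [← hf.isClosable.graph_closure_eq_closure_graph]
  exact IsClosed.submodule_topologicalClosure_eq hf

/-- `A₀ ≤ (-A₀)†` for skew-symmetric `A₀`. -/
lemma aux_le_adjoint_neg {A₀ : V →ₗ.[𝕜] V} (hdense : Dense (A₀.domain : Set V))
    (hskew : SkewSymmetric A₀) : A₀ ≤ (-A₀).adjoint := by
  have hd : Dense ((-A₀).domain : Set V) := hdense
  have h : (-A₀).IsFormalAdjoint A₀ := by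
    intro x y
    have hx : (x : V) ∈ A₀.domain := x.2
    have h0 : ⟪A₀ ⟨(x : V), hx⟩, (y : V)⟫ + ⟪(x : V), A₀ y⟫ = 0 := hskew ⟨(x : V), hx⟩ y
    have hAx : (-A₀) x = -(A₀ ⟨(x : V), hx⟩) := rfl
    rw [hAx, inner_neg_left]
    linear_combination -h0
  exact h.le_adjoint hd

lemma aux_dense_adjoint_neg {A₀ : V →ₗ.[𝕜] V} (hdense : Dense (A₀.domain : Set V))
    (hskew : SkewSymmetric A₀) : Dense (((-A₀).adjoint).domain : Set V) :=
  hdense.mono (aux_le_adjoint_neg hdense hskew).1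

/-- `A₀` is closable. -/
lemma aux_closable {A₀ : V →ₗ.[𝕜] V} (hdense : Dense (A₀.domain : Set V))
    (hskew : SkewSymmetric A₀) : A₀.IsClosable := by
  have hd : Dense ((-A₀).domain : Set V) := hdense
  exact (aux_adjoint_isClosed_s11 hd).isClosable.leIsClosable (aux_le_adjoint_neg hdense hskew)

/-- `(-A₀)†† ≤ -(-A₀)†` always. -/
lemma aux_adjoint_adjoint_le {A₀ : V →ₗ.[𝕜] V} (hdense : Dense (A₀.domain : Set V))
    (hskew : SkewSymmetric A₀) :
    ((-A₀).adjoint).adjoint ≤ -(-A₀).adjoint := by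
  have hd : Dense ((-A₀).domain : Set V) := hdense
  have hA : Dense (((-A₀).adjoint).domain : Set V) := aux_dense_adjoint_neg hdense hskew
  have hle := aux_le_adjoint_neg hdense hskew
  -- For `y` in the domain of `A††`, we have `⟪A† y, x⟫ = ⟪y, A₀ x⟫` for all `x ∈ D(A₀)`,
  -- hence `y ∈ D((-A₀)†)` with `(-A₀)† y = -(A†† y)`.
  have key : ∀ y : ((-A₀).adjoint).adjoint.domain,
      ∀ x : (-A₀).domain, ⟪-(((-A₀).adjoint).adjoint y), (x : V)⟫ = ⟪(y : V), (-A₀) x⟫ := by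
    intro y x
    have hx : (x : V) ∈ A₀.domain := x.2
    have h1 := adjoint_isFormalAdjoint hA y (Submodule.inclusion hle.1 ⟨(x : V), hx⟩)
    rw [← LinearPMap.apply_comp_inclusion hle ⟨(x : V), hx⟩] at h1
    have h1' : ⟪(((-A₀).adjoint).adjoint y : V), (x : V)⟫ =
        ⟪(y : V), A₀ ⟨(x : V), hx⟩⟫ := h1
    have h3 : (-A₀) x = -(A₀ ⟨(x : V), hx⟩) := rfl
    rw [inner_neg_left, h3, inner_neg_right, h1']
  constructor
  · intro y hy
    exact mem_adjoint_domain_of_exists (T := -A₀) y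
      ⟨-(((-A₀).adjoint).adjoint ⟨y, hy⟩), key ⟨y, hy⟩⟩
  · intro x y hxy
    have hy : (y : V) ∈ ((-A₀).adjoint).domain := y.2
    have : (-A₀).adjoint ⟨(y : V), hy⟩ = -(((-A₀).adjoint).adjoint x) := by
      apply adjoint_apply_eq hd
      intro z
      rw [← hxy] at *
      exact key x z
    calc ((-A₀).adjoint).adjoint x = -((-A₀).adjoint ⟨(y : V), hy⟩) := by rw [this, neg_neg]
    _ = (-(-A₀).adjoint) y := rfl

/-- The main geometric fact: if `A := (-A₀)†` is skew-symmetric, then `A ≤ Ā₀`. -/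
lemma aux_le_closure {A₀ : V →ₗ.[𝕜] V} (hdense : Dense (A₀.domain : Set V))
    (hskew : SkewSymmetric A₀)
    (hA : SkewSymmetric ((-A₀).adjoint)) : (-A₀).adjoint ≤ A₀.closure := by
  have hd : Dense ((-A₀).domain : Set V) := hdense
  rw [← le_graph_iff, ← (aux_closable hdense hskew).graph_closure_eq_closure_graph]
  intro q hq
  rw [mem_graph_iff] at hq
  obtain ⟨y, hy1, hy2⟩ := hq
  rw [← SetLike.mem_coe, Submodule.topologicalClosure_coe]
  -- move to the Hilbert space `WithLp 2 (V × V)`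
  set e := WithLp.prodContinuousLinearEquiv 2 𝕜 V V with he
  set G₀ : Submodule 𝕜 (WithLp 2 (V × V)) := A₀.graph.comap (e.toLinearEquiv : _ →ₗ[𝕜] V × V)
    with hG₀
  have hw : e.symm q ∈ G₀ᗮᗮ := by
    rw [Submodule.mem_orthogonal]
    intro p hp
    rw [Submodule.mem_orthogonal] at hp
    -- characterize elements of `G₀ᗮ`
    have hporth : ∀ x : A₀.domain, ⟪(x : V), p.fst⟫ + ⟪A₀ x, p.snd⟫ = 0 := by
      intro x
      have hmem : e.symm ((x : V), A₀ x) ∈ G₀ := by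
        rw [hG₀, Submodule.mem_comap]
        have : (e.toLinearEquiv : _ →ₗ[𝕜] V × V) (e.symm ((x : V), A₀ x)) = ((x : V), A₀ x) :=
          e.apply_symm_apply _
        rw [this]
        exact A₀.mem_graph x
      have := hp _ hmem
      rwa [WithLp.prod_inner_apply] at this
    -- hence `p = (A b, b)` for some `b ∈ D(A)` where `A = (-A₀)†`
    have hkey : ∀ x : (-A₀).domain, ⟪p.fst, (x : V)⟫ = ⟪p.snd, (-A₀) x⟫ := by
      intro x
      have hx : (x : V) ∈ A₀.domain := x.2
      have h1 := hporth ⟨(x : V), hx⟩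
      have h3 : (-A₀) x = -(A₀ ⟨(x : V), hx⟩) := rfl
      rw [h3, inner_neg_right]
      have h4 : ⟪(x : V), p.fst⟫ = -⟪A₀ ⟨(x : V), hx⟩, p.snd⟫ := by linear_combination h1
      calc ⟪p.fst, (x : V)⟫ = starRingEnd 𝕜 ⟪(x : V), p.fst⟫ := (inner_conj_symm _ _).symm
      _ = starRingEnd 𝕜 (-⟪A₀ ⟨(x : V), hx⟩, p.snd⟫) := by rw [h4]
      _ = -⟪p.snd, A₀ ⟨(x : V), hx⟩⟫ := by rw [_root_.map_neg, inner_conj_symm]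
    have hb : p.snd ∈ ((-A₀).adjoint).domain :=
      mem_adjoint_domain_of_exists _ ⟨p.fst, hkey⟩
    have hab : (-A₀).adjoint ⟨p.snd, hb⟩ = p.fst := adjoint_apply_eq hd ⟨p.snd, hb⟩ hkey
    -- now use skew-symmetry of `A`
    rw [WithLp.prod_inner_apply]
    have h5 : (e.symm q).fst = (y : V) := by
      rw [show (e.symm q).fst = q.1 from rfl, ← hy1]
    have h6 : (e.symm q).snd = (-A₀).adjoint y := by
      rw [show (e.symm q).snd = q.2 from rfl, ← hy2]
    rw [show (e.symm q).ofLp.1 = (y : V) from h5, show (e.symm q).ofLp.2 = (-A₀).adjoint y from h6,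
      show p.ofLp.1 = p.fst from rfl, ← hab]
    exact hA ⟨p.snd, hb⟩ y
  rw [Submodule.orthogonal_orthogonal_eq_closure, ← SetLike.mem_coe,
    Submodule.topologicalClosure_coe] at hw
  have hG₀coe : (G₀ : Set (WithLp 2 (V × V))) = e ⁻¹' (A₀.graph : Set (V × V)) := rfl
  have hpre : _root_.closure (⇑e ⁻¹' (A₀.graph : Set (V × V))) =
      ⇑e ⁻¹' _root_.closure (A₀.graph : Set (V × V)) :=
    (e.toHomeomorph.preimage_closure _).symm
  rw [hG₀coe, hpre] at hw
  have := Set.mem_preimage.mp hw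
  rwa [e.apply_symm_apply] at this

/-- If `Ā₀ = A` then `A` is skew-symmetric. -/
lemma aux_closure_skew {A₀ : V →ₗ.[𝕜] V} (hdense : Dense (A₀.domain : Set V))
    (hskew : SkewSymmetric A₀) (hc : A₀.closure = (-A₀).adjoint) :
    SkewSymmetric ((-A₀).adjoint) := by
  intro u v
  have hclos := (aux_closable hdense hskew).graph_closure_eq_closure_graph
  have hu : ((u : V), (-A₀).adjoint u) ∈ closure (A₀.graph : Set (V × V)) := by
    rw [← Submodule.topologicalClosure_coe, hclos, hc]
    exact ((-A₀).adjoint).mem_graph u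
  have hv : ((v : V), (-A₀).adjoint v) ∈ closure (A₀.graph : Set (V × V)) := by
    rw [← Submodule.topologicalClosure_coe, hclos, hc]
    exact ((-A₀).adjoint).mem_graph v
  have hset : ∀ p ∈ closure (A₀.graph : Set (V × V)), ∀ q ∈ closure (A₀.graph : Set (V × V)),
      ⟪p.2, q.1⟫ + ⟪p.1, q.2⟫ = 0 := by
    intro p hp q hq
    have hsub : closure (A₀.graph : Set (V × V)) ×ˢ closure (A₀.graph : Set (V × V)) ⊆
        {r : (V × V) × (V × V) | ⟪r.1.2, r.2.1⟫ + ⟪r.1.1, r.2.2⟫ = 0} := by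
      rw [← closure_prod_eq]
      apply closure_minimal
      · rintro ⟨p', q'⟩ ⟨hp', hq'⟩
        rw [SetLike.mem_coe, mem_graph_iff] at hp' hq'
        obtain ⟨a, ha1, ha2⟩ := hp'
        obtain ⟨b, hb1, hb2⟩ := hq'
        simp only [Set.mem_setOf_eq]
        rw [← ha1, ← ha2, ← hb1, ← hb2]
        exact hskew a b
      · exact isClosed_eq
          ((Continuous.inner (continuous_snd.comp continuous_fst)
              (continuous_fst.comp continuous_snd)).add
            (Continuous.inner (continuous_fst.comp continuous_fst)
              (continuous_snd.comp continuous_snd))) continuous_const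
    exact hsub (Set.mk_mem_prod hp hq)
  exact hset _ hu _ hv

/-- Let `(H₋, H₊, Γ₋, Γ₊)` be a boundary quadruple for a densely defined skew-symmetric
operator `A₀` with closure `Ā₀` and `A = (-A₀)*`.  The following are equivalent:
(i) `⟪Au, v⟫ + ⟪u, Av⟫ = 0` for all `u, v ∈ D(A)`; (ii) `Γ₋ = 0` and `Γ₊ = 0`;
(iii) `Ā₀ = A`; (iv) `-A* = A` (i.e. `A* = -A`). -/
theorem boundary_form_vanishes_tfae {Hm Hp : Type*}
    [NormedAddCommGroup Hm] [InnerProductSpace 𝕜 Hm]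
    [NormedAddCommGroup Hp] [InnerProductSpace 𝕜 Hp]
    (A₀ : V →ₗ.[𝕜] V) (hdense : Dense (A₀.domain : Set V)) (hskew : SkewSymmetric A₀)
    (Γm : ((-A₀).adjoint).domain →ₗ[𝕜] Hm) (Γp : ((-A₀).adjoint).domain →ₗ[𝕜] Hp)
    (hq : IsBoundaryQuadruple (-A₀).adjoint Γm Γp) :
    ((∀ u v : ((-A₀).adjoint).domain,
        @inner 𝕜 _ _ ((-A₀).adjoint u) (v : V) +
          @inner 𝕜 _ _ (u : V) ((-A₀).adjoint v) = 0) ↔ (Γm = 0 ∧ Γp = 0)) ∧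
      ((Γm = 0 ∧ Γp = 0) ↔ A₀.closure = (-A₀).adjoint) ∧
      (A₀.closure = (-A₀).adjoint ↔ ((-A₀).adjoint).adjoint = -(-A₀).adjoint) := by
  obtain ⟨hsm, hsp, hform, hker⟩ := hq
  have hd : Dense ((-A₀).domain : Set V) := hdense
  have hA : Dense (((-A₀).adjoint).domain : Set V) := aux_dense_adjoint_neg hdense hskew
  -- (i) ↔ (ii)
  have h12 : (∀ u v : ((-A₀).adjoint).domain,
      ⟪(-A₀).adjoint u, (v : V)⟫ + ⟪(u : V), (-A₀).adjoint v⟫ = 0) ↔ (Γm = 0 ∧ Γp = 0) := by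
    constructor
    · intro h
      have hkereq : LinearMap.ker Γm = LinearMap.ker Γp := by
        ext u
        have := hform u u
        rw [h u u] at this
        have hnorm : ⟪Γp u, Γp u⟫ = ⟪Γm u, Γm u⟫ := by linear_combination -this
        simp only [LinearMap.mem_ker]
        rw [← inner_self_eq_zero (𝕜 := 𝕜) (x := Γm u),
          ← inner_self_eq_zero (𝕜 := 𝕜) (x := Γp u), hnorm]
      rw [hkereq, sup_idem] at hker
      rw [← hkereq] at hker
      constructor
      · exact LinearMap.ker_eq_top.mp hker
      · rw [hkereq] at hker
        exact LinearMap.ker_eq_top.mp hker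
    · rintro ⟨hm, hp⟩ u v
      rw [hform u v, hm, hp]
      simp
  -- (i) → (iii)
  have h13 : (∀ u v : ((-A₀).adjoint).domain,
      ⟪(-A₀).adjoint u, (v : V)⟫ + ⟪(u : V), (-A₀).adjoint v⟫ = 0) →
      A₀.closure = (-A₀).adjoint := by
    intro h
    refine le_antisymm ?_ (aux_le_closure hdense hskew h)
    have := (aux_adjoint_isClosed_s11 hd).isClosable.closure_mono (aux_le_adjoint_neg hdense hskew)
    rwa [aux_closure_eq_self (aux_adjoint_isClosed_s11 hd)] at this
  -- (iii) → (i)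
  have h31 := aux_closure_skew hdense hskew
  -- (i) → (iv)
  have h14 : (∀ u v : ((-A₀).adjoint).domain,
      ⟪(-A₀).adjoint u, (v : V)⟫ + ⟪(u : V), (-A₀).adjoint v⟫ = 0) →
      ((-A₀).adjoint).adjoint = -(-A₀).adjoint := by
    intro h
    refine le_antisymm (aux_adjoint_adjoint_le hdense hskew) ?_
    have hfa : ((-A₀).adjoint).IsFormalAdjoint (-(-A₀).adjoint) := by
      intro x y
      have hy : (y : V) ∈ ((-A₀).adjoint).domain := y.2
      have h3 : (-(-A₀).adjoint) y = -((-A₀).adjoint ⟨(y : V), hy⟩) := rfl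
      rw [h3, inner_neg_right]
      have := h x ⟨(y : V), hy⟩
      linear_combination this
    exact hfa.le_adjoint hA
  -- (iv) → (i)
  have h41 : ((-A₀).adjoint).adjoint = -(-A₀).adjoint →
      (∀ u v : ((-A₀).adjoint).domain,
        ⟪(-A₀).adjoint u, (v : V)⟫ + ⟪(u : V), (-A₀).adjoint v⟫ = 0) := by
    intro h u v
    have hdom := congrArg LinearPMap.domain h
    have hu : (u : V) ∈ (((-A₀).adjoint).adjoint).domain := by
      rw [hdom]; exact u.2
    have h1 := adjoint_isFormalAdjoint hA ⟨(u : V), hu⟩ v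
    have h2 : (((-A₀).adjoint).adjoint) ⟨(u : V), hu⟩ = -((-A₀).adjoint u) := by
      rw [LinearPMap.ext_iff] at h
      obtain ⟨_, h'⟩ := h
      exact (h' (x := (u : V)) (hf := hu) (hg := u.2)).trans rfl
    rw [h2, inner_neg_left] at h1
    linear_combination -h1
  exact ⟨h12, ⟨fun h => h13 (h12.mpr h), fun h => h12.mp (h31 h)⟩,
    ⟨fun h => h14 (h31 h), fun h => h13 (h41 h)⟩⟩
end

section
/- Let (H₋, H₊, Γ₋, Γ₊) be a boundary quadruple for a densely defined skew-symmetric operator A₀ on a Hilbert space V, with A = (−A₀)* and closure Ā₀. If Γ₋ = 0, then Ā₀ is the only m-dissipative extension of A₀: Ā₀ is m-dissipative and every m-dissipative operator B with A₀ ⊆ B equals Ā₀. -/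
variable {𝕜 V : Type*} [RCLike 𝕜] [NormedAddCommGroup V] [InnerProductSpace 𝕜 V]
  [CompleteSpace V]

/-!
A dissipative operator `B` satisfies `‖x‖ ≤ ‖x - Bx‖`, so `Id - B` is injective, with closed range
when `B` is closed. With `Γ₋ = 0`, Green's identity gives `Re ⟪Au, u⟫ = ‖Γ₊u‖² / 2 ≥ 0` for
`A = (-A₀)*`, while a vector `v` orthogonal to the range of `Id - A₀` lies in `D(A)` with `Av = -v`;
so `v = 0`, the range of `Id - Ā₀` is dense and closed, and `Ā₀` is m-dissipative.
If `B ⊇ A₀` is dissipative and `x ∈ D(B)`, solve `u - Ā₀u = x - Bx`: the estimate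
`‖x - w‖ ≤ ‖(x - Bx) - (w - A₀w)‖` for `w ∈ D(A₀)` passes to the graph closure and forces `u = x`,
so `B ⊆ Ā₀`. An m-dissipative operator has no proper dissipative extension, hence `B = Ā₀`.
-/

open scoped InnerProductSpace

namespace LinearPMap

section Closure

variable {R E F : Type*} [CommRing R] [AddCommGroup E] [AddCommGroup F] [Module R E]
  [Module R F] [TopologicalSpace E] [TopologicalSpace F] [ContinuousAdd E] [ContinuousAdd F]
  [TopologicalSpace R] [ContinuousSMul R E] [ContinuousSMul R F]

theorem IsClosable.closure_mem_of_isClosed {f : E →ₗ.[R] F} (hf : f.IsClosable)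
    {s : Set (E × F)} (hs : _root_.IsClosed s) (h : ∀ x : f.domain, ((x : E), f x) ∈ s)
    (x : f.closure.domain) : ((x : E), f.closure x) ∈ s := by
  have hgraph : (f.graph : Set (E × F)) ⊆ s := by
    rintro ⟨a, b⟩ hab
    obtain ⟨y, rfl, rfl⟩ := (mem_graph_iff f).1 hab
    exact h y
  apply closure_minimal hgraph hs
  rw [← Submodule.topologicalClosure_coe, hf.graph_closure_eq_closure_graph]
  exact f.closure.mem_graph x

end Closure

variable {R E F : Type*} [Ring R] [AddCommGroup E] [AddCommGroup F] [Module R E] [Module R F]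

theorem apply_of_le {f g : E →ₗ.[R] F} (h : f ≤ g) (x : f.domain) : g ⟨x, h.1 x.2⟩ = f x :=
  (h.2 rfl).symm

def idSub (A : E →ₗ.[R] E) : A.domain →ₗ[R] E := A.domain.subtype - A.toFun

@[simp]
theorem idSub_apply (A : E →ₗ.[R] E) (x : A.domain) : A.idSub x = (x : E) - A x := rfl

theorem range_idSub_mono {A B : E →ₗ.[R] E} (h : A ≤ B) :
    LinearMap.range A.idSub ≤ LinearMap.range B.idSub := by
  rintro _ ⟨x, rfl⟩
  exact ⟨⟨x, h.1 x.2⟩, by rw [idSub_apply, idSub_apply, apply_of_le h]⟩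

end LinearPMap

section InnerProductSpace

variable {E : Type*} [NormedAddCommGroup E] [InnerProductSpace 𝕜 E]

theorem SkewSymmetric.dissipative {A : E →ₗ.[𝕜] E} (hA : SkewSymmetric A) : Dissipative A := by
  intro x
  have h := congrArg RCLike.re (hA x x)
  rw [map_add, map_zero, inner_re_symm (x : E) (A x)] at h
  linarith

theorem IsBoundaryQuadruple.re_inner_nonneg {A : E →ₗ.[𝕜] E} {Hm Hp : Type*}
    [NormedAddCommGroup Hm] [InnerProductSpace 𝕜 Hm]
    [NormedAddCommGroup Hp] [InnerProductSpace 𝕜 Hp]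
    {Γm : A.domain →ₗ[𝕜] Hm} {Γp : A.domain →ₗ[𝕜] Hp} (hq : IsBoundaryQuadruple A Γm Γp)
    (hΓm : Γm = 0) (u : A.domain) : 0 ≤ RCLike.re ⟪A u, (u : E)⟫_𝕜 := by
  obtain ⟨-, -, hgreen, -⟩ := hq
  have h := congrArg RCLike.re (hgreen u u)
  rw [hΓm, LinearMap.zero_apply, inner_zero_left, sub_zero, map_add,
    inner_re_symm (u : E) (A u)] at h
  linarith [inner_self_nonneg (𝕜 := 𝕜) (x := Γp u)]

theorem Dissipative.norm_le_norm_sub {B : E →ₗ.[𝕜] E} (hB : Dissipative B) (x : B.domain) :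
    ‖(x : E)‖ ≤ ‖(x : E) - B x‖ := by
  rcases (norm_nonneg (x : E)).eq_or_lt with hx | hx
  · rw [← hx]
    exact norm_nonneg _
  refine le_of_mul_le_mul_right ?_ hx
  calc ‖(x : E)‖ * ‖(x : E)‖ = RCLike.re ⟪(x : E), x⟫_𝕜 := (inner_self_eq_norm_mul_norm _).symm
    _ ≤ RCLike.re ⟪(x : E), x⟫_𝕜 - RCLike.re ⟪B x, x⟫_𝕜 := by linarith [hB x]
    _ = RCLike.re ⟪(x : E) - B x, x⟫_𝕜 := by rw [inner_sub_left, map_sub]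
    _ ≤ ‖(x : E) - B x‖ * ‖(x : E)‖ := re_inner_le_norm _ _

theorem Dissipative.injective_idSub {B : E →ₗ.[𝕜] E} (hB : Dissipative B) :
    Function.Injective B.idSub := by
  rw [← LinearMap.ker_eq_bot, LinearMap.ker_eq_bot']
  intro x hx
  rw [LinearPMap.idSub_apply] at hx
  have := hB.norm_le_norm_sub x
  rw [hx, norm_zero, norm_le_zero_iff] at this
  exact Subtype.ext this

theorem Dissipative.closure {A : E →ₗ.[𝕜] E} (hA : Dissipative A) (hcl : A.IsClosable) :
    Dissipative A.closure :=
  hcl.closure_mem_of_isClosed (s := {p : E × E | RCLike.re ⟪p.2, p.1⟫_𝕜 ≤ 0})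
    (isClosed_le (by fun_prop) continuous_const) hA

theorem Dissipative.isClosed_range_idSub [CompleteSpace E] {B : E →ₗ.[𝕜] E}
    (hB : Dissipative B) (hcl : B.IsClosed) : IsClosed (LinearMap.range B.idSub : Set E) := by
  -- `(x, Bx) ↦ x - Bx` is antilipschitz on the graph, which is complete.
  have : CompleteSpace B.graph := hcl.completeSpace_coe
  let φ : B.graph →L[𝕜] E :=
    (ContinuousLinearMap.fst 𝕜 E E - ContinuousLinearMap.snd 𝕜 E E).comp B.graph.subtypeL
  have hrange : (LinearMap.range B.idSub : Set E) = Set.range φ := by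
    ext y
    constructor
    · rintro ⟨x, rfl⟩
      exact ⟨⟨((x : E), B x), B.mem_graph x⟩, rfl⟩
    · rintro ⟨⟨⟨a, b⟩, hab⟩, rfl⟩
      obtain ⟨x, rfl, rfl⟩ := B.mem_graph_iff.1 hab
      exact ⟨x, rfl⟩
  have hbound : ∀ p, ‖p‖ ≤ (2 : NNReal) * ‖φ p‖ := by
    rintro ⟨⟨a, b⟩, hab⟩
    obtain ⟨x, rfl, rfl⟩ := B.mem_graph_iff.1 hab
    have hx := hB.norm_le_norm_sub x
    have hBx : ‖B x‖ ≤ ‖(x : E)‖ + ‖(x : E) - B x‖ := by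
      calc ‖B x‖ = ‖(x : E) - ((x : E) - B x)‖ := by rw [sub_sub_cancel]
        _ ≤ _ := norm_sub_le _ _
    change max ‖(x : E)‖ ‖B x‖ ≤ (2 : NNReal) * ‖(x : E) - B x‖
    push_cast
    exact max_le (by linarith [norm_nonneg ((x : E) - B x)]) (by linarith)
  rw [hrange]
  exact (φ.antilipschitz_of_bound hbound).isClosed_range φ.uniformContinuous

theorem MDissipative.eq_of_le {A B : E →ₗ.[𝕜] E} (hA : MDissipative A) (hB : Dissipative B)
    (h : A ≤ B) : A = B := by
  refine LinearPMap.eq_of_le_of_domain_eq h (le_antisymm h.1 fun x hx => ?_)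
  obtain ⟨u, hu⟩ := hA.2 (B.idSub ⟨x, hx⟩)
  have : B.idSub ⟨u, h.1 u.2⟩ = B.idSub ⟨x, hx⟩ := by
    rw [← hu, LinearPMap.idSub_apply, LinearPMap.apply_of_le h]
  have hux : (u : E) = x := congrArg Subtype.val (hB.injective_idSub this)
  exact hux ▸ u.2

theorem Dissipative.le_closure_of_le {A B : E →ₗ.[𝕜] E} (hB : Dissipative B) (hAB : A ≤ B)
    (hA : A.IsClosable) (hsurj : Function.Surjective A.closure.idSub) : B ≤ A.closure := by
  refine LinearPMap.le_of_le_graph ?_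
  rintro ⟨a, b⟩ hab
  obtain ⟨x, rfl, rfl⟩ := B.mem_graph_iff.1 hab
  obtain ⟨u, hu⟩ := hsurj (B.idSub x)
  rw [LinearPMap.idSub_apply, LinearPMap.idSub_apply] at hu
  have hest : ‖(x : E) - u‖ ≤ ‖((x : E) - B x) - ((u : E) - A.closure u)‖ := by
    refine hA.closure_mem_of_isClosed
      (s := {p : E × E | ‖(x : E) - p.1‖ ≤ ‖((x : E) - B x) - (p.1 - p.2)‖})
      (isClosed_le (by fun_prop) (by fun_prop)) (fun w => ?_) u
    have := hB.norm_le_norm_sub (x - ⟨w, hAB.1 w.2⟩)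
    rw [Submodule.coe_sub, LinearPMap.map_sub, LinearPMap.apply_of_le hAB] at this
    refine this.trans_eq (congrArg norm ?_)
    abel
  rw [hu, sub_self, norm_zero, norm_le_zero_iff, sub_eq_zero] at hest
  rw [← hest, sub_right_inj] at hu
  simpa only [hest, ← hu] using A.closure.mem_graph u

end InnerProductSpace

section CompleteSpace

variable {E : Type*} [NormedAddCommGroup E] [InnerProductSpace 𝕜 E] [CompleteSpace E]

theorem SkewSymmetric.le_adjoint_neg {A : E →ₗ.[𝕜] E} (hA : SkewSymmetric A)
    (hdense : Dense (A.domain : Set E)) : A ≤ (-A).adjoint :=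
  LinearPMap.IsFormalAdjoint.le_adjoint (T := -A) hdense fun x y => by
    rw [LinearPMap.neg_apply, inner_neg_left]
    exact neg_eq_of_add_eq_zero_right (hA x y)

theorem SkewSymmetric.isClosable {A : E →ₗ.[𝕜] E} (hA : SkewSymmetric A)
    (hdense : Dense (A.domain : Set E)) : A.IsClosable :=
  LinearPMap.isClosable_iff_exists_closed_extension.2
    ⟨_, LinearPMap.adjoint_isClosed (T := -A) hdense, hA.le_adjoint_neg hdense⟩

/-- A vector orthogonal to the range of `Id - A` is an eigenvector of `(-A)*` for `-1`. -/
theorem orthogonal_range_idSub_eq_bot {A : E →ₗ.[𝕜] E} (hdense : Dense (A.domain : Set E))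
    (hpos : ∀ u : (-A).adjoint.domain, 0 ≤ RCLike.re ⟪(-A).adjoint u, (u : E)⟫_𝕜) :
    (LinearMap.range A.idSub)ᗮ = ⊥ := by
  rw [Submodule.eq_bot_iff]
  intro v hv
  have hadj : ∀ x : (-A).domain, ⟪-v, (x : E)⟫_𝕜 = ⟪v, (-A) x⟫_𝕜 := by
    intro x
    have h := Submodule.inner_left_of_mem_orthogonal (LinearMap.mem_range_self A.idSub x) hv
    rw [LinearPMap.idSub_apply, inner_sub_right, sub_eq_zero] at h
    rw [LinearPMap.neg_apply, inner_neg_left, inner_neg_right, h]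
  have hv_mem : v ∈ (-A).adjoint.domain := LinearPMap.mem_adjoint_domain_of_exists v ⟨-v, hadj⟩
  have hAv : (-A).adjoint ⟨v, hv_mem⟩ = -v := LinearPMap.adjoint_apply_eq (T := -A) hdense _ hadj
  have h := hpos ⟨v, hv_mem⟩
  rw [hAv, inner_neg_left, map_neg, inner_self_eq_norm_mul_norm, neg_nonneg] at h
  exact norm_eq_zero.1 (mul_self_eq_zero.1 (le_antisymm h (mul_self_nonneg _)))

theorem Dissipative.mDissipative_closure {A : E →ₗ.[𝕜] E} (hA : Dissipative A)
    (hcl : A.IsClosable) (hperp : (LinearMap.range A.idSub)ᗮ = ⊥) :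
    MDissipative A.closure := by
  have hdiss := hA.closure hcl
  have hrange : LinearMap.range A.closure.idSub = ⊤ := by
    rw [eq_top_iff, ← Submodule.topologicalClosure_eq_top_iff.2 hperp]
    exact Submodule.topologicalClosure_minimal _
      (LinearPMap.range_idSub_mono A.le_closure)
      (hdiss.isClosed_range_idSub hcl.closure_isClosed)
  exact ⟨hdiss, LinearMap.range_eq_top.1 hrange⟩

end CompleteSpace

/-- If `Γ₋ = 0`, then the closure `Ā₀` is the unique m-dissipative extension of `A₀`. -/
theorem unique_mDissipative_extension_of_gammaMinus_eq_zero {Hm Hp : Type*}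
    [NormedAddCommGroup Hm] [InnerProductSpace 𝕜 Hm]
    [NormedAddCommGroup Hp] [InnerProductSpace 𝕜 Hp]
    (A₀ : V →ₗ.[𝕜] V) (hdense : Dense (A₀.domain : Set V)) (hskew : SkewSymmetric A₀)
    (Γm : ((-A₀).adjoint).domain →ₗ[𝕜] Hm) (Γp : ((-A₀).adjoint).domain →ₗ[𝕜] Hp)
    (hq : IsBoundaryQuadruple (-A₀).adjoint Γm Γp)
    (hΓm : Γm = 0) :
    MDissipative A₀.closure ∧
      ∀ B : V →ₗ.[𝕜] V, A₀ ≤ B → MDissipative B → B = A₀.closure := by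
  have hclosable := hskew.isClosable hdense
  have hmd : MDissipative A₀.closure :=
    hskew.dissipative.mDissipative_closure hclosable
      (orthogonal_range_idSub_eq_bot hdense (hq.re_inner_nonneg hΓm))
  exact ⟨hmd, fun B hAB hB => hB.eq_of_le hmd.1 (hB.1.le_closure_of_le hAB hclosable hmd.2)⟩
end

section
/- Let B be an operator on a Hilbert space V over 𝕂 = ℝ or ℂ. Then both B and −B are m-dissipative if and only if D(B) is dense in V and B* = −B, where B* is the adjoint of B. (Equivalently, by the Lumer–Phillips theorem, these conditions characterize generators of unitary C₀-groups.) -/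
/-!
If `B` and `-B` are both dissipative then `Re ⟪B x, x⟫ = 0`, which by polarization is the
skew-symmetry `⟪B u, x⟫ = -⟪u, B x⟫`, i.e. `-B ≤ B*`. For densely defined `A` one has
`(range (1 - A))ᗮ = ker (1 - A*)`. Hence if `1 - B` is onto, `1 - B*` is injective, and the
extension `-B ≤ B*` must be an equality because `1 + B` is onto.

Conversely, if `B* = -B` then `B` is closed and dissipative, so `1 - B` is bounded below on the
closed graph of `B` and has closed range; its orthogonal complement `ker (1 - B*) = ker (1 + B)`
vanishes since `-B` is dissipative. The same argument applies to `-B`, as `(-B)* = B`.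
-/

variable {𝕜 V : Type*} [RCLike 𝕜] [NormedAddCommGroup V] [InnerProductSpace 𝕜 V]
  [CompleteSpace V]

open RCLike
open scoped InnerProductSpace LinearPMap

namespace LinearPMap

section Module

variable {R E : Type*} [Ring R] [AddCommGroup E] [Module R E]

def oneSub (A : E →ₗ.[R] E) : A.domain →ₗ[R] E :=
  A.domain.subtype - A.toFun

@[simp]
theorem oneSub_apply (A : E →ₗ.[R] E) (x : A.domain) : A.oneSub x = x - A x :=
  rfl

theorem eq_of_le_of_surjective_oneSub {A C : E →ₗ.[R] E} (hle : A ≤ C)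
    (hA : Function.Surjective A.oneSub) (hC : Function.Injective C.oneSub) : A = C := by
  refine eq_of_le_of_domain_eq hle (le_antisymm hle.1 fun v hv => ?_)
  obtain ⟨x, hx⟩ := hA (C.oneSub ⟨v, hv⟩)
  have hxv : (⟨x, hle.1 x.2⟩ : C.domain) = ⟨v, hv⟩ :=
    hC (by rw [← hx, oneSub_apply, oneSub_apply, hle.2 (y := ⟨x, hle.1 x.2⟩) rfl])
  obtain rfl : (x : E) = v := congrArg Subtype.val hxv
  exact x.2

end Module

section Topology

variable {R E F : Type*} [CommRing R] [AddCommGroup E] [Module R E] [TopologicalSpace E]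
  [AddCommGroup F] [Module R F] [TopologicalSpace F] [IsTopologicalAddGroup F]

theorem IsClosed.neg {f : E →ₗ.[R] F} (hf : f.IsClosed) : (-f).IsClosed := by
  rw [LinearPMap.IsClosed, neg_graph, Submodule.map_coe]
  exact ((Homeomorph.refl E).prodCongr (Homeomorph.neg F)).isClosedMap _ hf

end Topology

section InnerProduct

variable {E : Type*} [NormedAddCommGroup E] [InnerProductSpace 𝕜 E] {A : E →ₗ.[𝕜] E}

theorem isFormalAdjoint_neg_iff :
    A.IsFormalAdjoint (-A) ↔ ∀ x : A.domain, re ⟪A x, (x : E)⟫_𝕜 = 0 := by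
  constructor
  · intro h x
    have hx := congrArg re (h x x)
    rw [neg_apply, inner_neg_right, _root_.map_neg, inner_re_symm (x : E)] at hx
    linarith
  · intro h u x
    have hre : ∀ a b : A.domain, re (⟪A a, (b : E)⟫_𝕜 + ⟪(a : E), A b⟫_𝕜) = 0 := by
      intro a b
      have hab := h (a + b)
      rw [map_add, Submodule.coe_add, inner_add_left, inner_add_right, inner_add_right,
        _root_.map_add, _root_.map_add, _root_.map_add, h a, h b,
        inner_re_symm (𝕜 := 𝕜) (A b)] at hab
      rw [_root_.map_add]
      linarith
    -- `⟪A u, x⟫ + ⟪u, A x⟫` is linear in `x`, so testing it against `I • x` kills its imaginary part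
    have him := hre u ((I : 𝕜) • x)
    rw [map_smul, Submodule.coe_smul, inner_smul_right, inner_smul_right, ← mul_add,
      I_mul_re, neg_eq_zero] at him
    rw [neg_apply, inner_neg_right, eq_neg_iff_add_eq_zero, RCLike.ext_iff]
    exact ⟨by simpa using hre u x, by simpa using him⟩

end InnerProduct

section Adjoint

variable {E F : Type*} [NormedAddCommGroup E] [InnerProductSpace 𝕜 E] [CompleteSpace E]
  [NormedAddCommGroup F] [InnerProductSpace 𝕜 F] {T : E →ₗ.[𝕜] F} {A : E →ₗ.[𝕜] E}

theorem adjoint_neg (hT : Dense (T.domain : Set E)) : (-T)† = -T† := by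
  have hT' : Dense ((-T).domain : Set E) := hT
  have hdom : (-T)†.domain = T†.domain := by
    ext y
    rw [mem_adjoint_domain_iff, mem_adjoint_domain_iff]
    change Continuous ((innerₛₗ 𝕜 y).comp (-T.toFun)) ↔ _
    rw [LinearMap.comp_neg, LinearMap.coe_neg, continuous_neg_iff]
  refine LinearPMap.ext hdom fun y hy hy' => adjoint_apply_eq hT' _ fun x => ?_
  rw [neg_apply, inner_neg_left, neg_apply, inner_neg_right, neg_inj]
  exact adjoint_isFormalAdjoint hT ⟨y, hy'⟩ x

theorem orthogonal_range_oneSub (hA : Dense (A.domain : Set E)) :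
    (LinearMap.range A.oneSub)ᗮ = (LinearMap.ker A†.oneSub).map A†.domain.subtype := by
  ext y
  have hperp : y ∈ (LinearMap.range A.oneSub)ᗮ ↔ ∀ x : A.domain, ⟪y, (x : E)⟫_𝕜 = ⟪y, A x⟫_𝕜 := by
    simp only [Submodule.mem_orthogonal', LinearMap.mem_range, forall_exists_index,
      forall_apply_eq_imp_iff, oneSub_apply, inner_sub_right, sub_eq_zero]
  simp only [hperp, Submodule.mem_map, LinearMap.mem_ker, oneSub_apply, sub_eq_zero,
    Submodule.subtype_apply]
  constructor
  · intro h
    have hy := mem_adjoint_domain_of_exists y ⟨y, h⟩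
    exact ⟨⟨y, hy⟩, (adjoint_apply_eq hA ⟨y, hy⟩ h).symm, rfl⟩
  · rintro ⟨v, hv, rfl⟩ x
    rw [← adjoint_isFormalAdjoint hA v x, ← hv]

theorem injective_oneSub_adjoint (hA : Dense (A.domain : Set E))
    (hs : Function.Surjective A.oneSub) : Function.Injective A†.oneSub := by
  have h := orthogonal_range_oneSub hA
  rw [LinearMap.range_eq_top.mpr hs, Submodule.top_orthogonal_eq_bot,
    ← Submodule.map_bot A†.domain.subtype] at h
  exact LinearMap.ker_eq_bot.mp (Submodule.map_injective_of_injective Subtype.val_injective h.symm)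

end Adjoint

end LinearPMap

section Dissipative

variable {E : Type*} [NormedAddCommGroup E] [InnerProductSpace 𝕜 E] {A : E →ₗ.[𝕜] E}

theorem dissipative_and_dissipative_neg_iff :
    Dissipative A ∧ Dissipative (-A) ↔ ∀ x : A.domain, re ⟪A x, (x : E)⟫_𝕜 = 0 := by
  refine ⟨fun ⟨h, hn⟩ x => le_antisymm (h x) ?_, fun h => ⟨fun x => (h x).le, fun x => ?_⟩⟩
  · have hx := hn x
    rw [LinearPMap.neg_apply, inner_neg_left, map_neg] at hx
    linarith
  · rw [LinearPMap.neg_apply, inner_neg_left, map_neg, h x, neg_zero]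

theorem Dissipative.norm_sq_le_re_inner_oneSub (hA : Dissipative A) (x : A.domain) :
    ‖(x : E)‖ ^ 2 ≤ re ⟪(x : E), A.oneSub x⟫_𝕜 := by
  rw [LinearPMap.oneSub_apply, inner_sub_right, map_sub, inner_self_eq_norm_sq, inner_re_symm]
  linarith [hA x]

theorem Dissipative.norm_sq_add_norm_sq_le (hA : Dissipative A) (x : A.domain) :
    ‖(x : E)‖ ^ 2 + ‖A x‖ ^ 2 ≤ ‖A.oneSub x‖ ^ 2 := by
  rw [LinearPMap.oneSub_apply, @norm_sub_sq 𝕜, inner_re_symm]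
  linarith [hA x]

theorem Dissipative.injective_oneSub (hA : Dissipative A) : Function.Injective A.oneSub := by
  refine (injective_iff_map_eq_zero _).mpr fun x hx => ?_
  have h := hA.norm_sq_le_re_inner_oneSub x
  rw [hx, inner_zero_right, map_zero, sq_nonpos_iff, norm_eq_zero] at h
  exact Subtype.ext h

end Dissipative

section Complete

variable {A : V →ₗ.[𝕜] V}

theorem MDissipative.dense_domain (hA : MDissipative A) : Dense (A.domain : Set V) := by
  have hbot : A.domainᗮ = ⊥ := by
    refine (Submodule.eq_bot_iff _).mpr fun y hy => ?_
    obtain ⟨x, rfl⟩ := hA.2 y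
    have h := hA.1.norm_sq_le_re_inner_oneSub x
    rw [LinearPMap.oneSub_apply, Submodule.inner_right_of_mem_orthogonal x.2 hy, map_zero,
      sq_nonpos_iff, norm_eq_zero] at h
    rw [show x = 0 from Subtype.ext h, LinearPMap.map_zero, Submodule.coe_zero, sub_zero]
  rw [Submodule.dense_iff_topologicalClosure_eq_top, ← Submodule.orthogonal_orthogonal_eq_closure,
    hbot, Submodule.bot_orthogonal_eq_top]

theorem Dissipative.isClosed_range_oneSub (hA : Dissipative A) (hc : A.IsClosed) :
    IsClosed (LinearMap.range A.oneSub : Set V) := by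
  have : CompleteSpace A.graph := hc.completeSpace_coe
  let g : A.graph →L[𝕜] V :=
    (ContinuousLinearMap.fst 𝕜 V V - ContinuousLinearMap.snd 𝕜 V V).comp A.graph.subtypeL
  have hg : AntilipschitzWith 1 g := by
    refine AddMonoidHomClass.antilipschitz_of_bound g fun ⟨⟨p₁, p₂⟩, hp⟩ => ?_
    obtain ⟨x, rfl, rfl⟩ := A.mem_graph_iff.mp hp
    have h := hA.norm_sq_add_norm_sq_le x
    change ‖((x : V), A x)‖ ≤ 1 * ‖A.oneSub x‖
    rw [one_mul, Prod.norm_def]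
    exact max_le (le_of_pow_le_pow_left₀ two_ne_zero (norm_nonneg _) (by nlinarith))
      (le_of_pow_le_pow_left₀ two_ne_zero (norm_nonneg _) (by nlinarith))
  have hrange : Set.range g = LinearMap.range A.oneSub := by
    ext y
    constructor
    · rintro ⟨⟨⟨p₁, p₂⟩, hp⟩, rfl⟩
      obtain ⟨x, rfl, rfl⟩ := A.mem_graph_iff.mp hp
      exact ⟨x, rfl⟩
    · rintro ⟨x, rfl⟩
      exact ⟨⟨_, A.mem_graph x⟩, rfl⟩
  rw [← hrange]
  exact hg.isClosed_range g.uniformContinuous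

theorem Dissipative.mDissipative_of_dissipative_adjoint (hA : Dissipative A)
    (hd : Dense (A.domain : Set V)) (hc : A.IsClosed) (hA' : Dissipative A†) : MDissipative A := by
  have hker : LinearMap.ker A†.oneSub = ⊥ := LinearMap.ker_eq_bot.mpr hA'.injective_oneSub
  have hperp : (LinearMap.range A.oneSub)ᗮ = ⊥ := by
    rw [LinearPMap.orthogonal_range_oneSub hd, hker, Submodule.map_bot]
  have htop : LinearMap.range A.oneSub = ⊤ := by
    rw [← (hA.isClosed_range_oneSub hc).submodule_topologicalClosure_eq,
      ← Submodule.orthogonal_orthogonal_eq_closure, hperp, Submodule.bot_orthogonal_eq_top]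
  exact ⟨hA, LinearMap.range_eq_top.mp htop⟩

theorem mDissipative_of_adjoint_eq_neg (hd : Dense (A.domain : Set V)) (h : A† = -A) :
    MDissipative A := by
  have hre : ∀ x : A.domain, re ⟪A x, (x : V)⟫_𝕜 = 0 := by
    rw [← LinearPMap.isFormalAdjoint_neg_iff, ← h]
    exact (LinearPMap.adjoint_isFormalAdjoint hd).symm
  obtain ⟨hA, hnA⟩ := dissipative_and_dissipative_neg_iff.mpr hre
  have hc : A.IsClosed := by
    simpa only [h, neg_neg] using (LinearPMap.adjoint_isClosed hd).neg
  exact hA.mDissipative_of_dissipative_adjoint hd hc (h ▸ hnA)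

end Complete

/-- An operator `B` on a Hilbert space is such that both `B` and `-B` are m-dissipative
(equivalently, by Lumer–Phillips, `B` generates a unitary `C₀`-group) if and only if
`D(B)` is dense and `B* = -B`. -/
theorem mDissipative_self_and_neg_iff_skewAdjoint (B : V →ₗ.[𝕜] V) :
    (MDissipative B ∧ MDissipative (-B)) ↔
      Dense (B.domain : Set V) ∧ B.adjoint = -B := by
  constructor
  · rintro ⟨hB, hnB⟩
    have hd := hB.dense_domain
    have hskew : B.IsFormalAdjoint (-B) := LinearPMap.isFormalAdjoint_neg_iff.mpr
      (dissipative_and_dissipative_neg_iff.mp ⟨hB.1, hnB.1⟩)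
    exact ⟨hd, (LinearPMap.eq_of_le_of_surjective_oneSub (hskew.le_adjoint hd) hnB.2
      (LinearPMap.injective_oneSub_adjoint hd hB.2)).symm⟩
  · rintro ⟨hd, h⟩
    refine ⟨mDissipative_of_adjoint_eq_neg hd h, mDissipative_of_adjoint_eq_neg hd ?_⟩
    rw [LinearPMap.adjoint_neg hd, h, neg_neg]
end
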